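/- arXiv:2604.01058 — 11 statements merged into one kernel-verified Lean document; each statement's English description precedes it below -/
import Mathlib

section
/- Let L be a finite-dimensional real normed vector space with Lie bracket [·,·], let η : L → L ⊗ L be a linear map which is a 1-cocycle for [·,·] with skew-symmetric values and satisfies the co-Jacobi condition (so (L, η) is a Lie bialgebra), and let (φ_ε)_{ε>0} be a family of linear automorphisms of L such that the contracted bracket B(X,Y) := lim_{ε→0⁺} φ_ε⁻¹([φ_ε(X), φ_ε(Y)]) exists for all X, Y. Let n be a real number such that η'(X) := lim_{ε→0⁺} ε^n (φ_ε⁻¹ ⊗ φ_ε⁻¹)(η(φ_ε(X))) exists for all X ∈ L. Then η' is linear with skew-symmetric values, is a 1-cocycle for the contracted bracket B, and satisfies the co-Jacobi condition; that is, (L, B, η') is a Lie bialgebra. -/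
open Filter

/-- The adjoint action of `X` on `L ⊗ L` induced by a bilinear bracket `br`:
`X · (a ⊗ b) = [X,a] ⊗ b + a ⊗ [X,b]`. -/
noncomputable def adT {L : Type*} [AddCommGroup L] [Module ℝ L]
    (br : L →ₗ[ℝ] L →ₗ[ℝ] L) (X : L) :
    TensorProduct ℝ L L →ₗ[ℝ] TensorProduct ℝ L L :=
  TensorProduct.map (br X) LinearMap.id + TensorProduct.map LinearMap.id (br X)

/-- The bracket on the dual space `L*` induced by a linear map `δ : L → L ⊗ L`:
`⟨[ξ,η]*, X⟩ = (ξ ⊗ η)(δ X)`. -/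
noncomputable def dualBr {L : Type*} [AddCommGroup L] [Module ℝ L]
    (δ : L →ₗ[ℝ] TensorProduct ℝ L L) (ξ η : Module.Dual ℝ L) : Module.Dual ℝ L :=
  (TensorProduct.lift ((LinearMap.mul ℝ ℝ).compl₁₂ ξ η)).comp δ

/-- The co-Jacobi condition: the induced bracket on the dual space is a Lie bracket
(skew-symmetry and the Jacobi identity). -/
def CoJacobi {L : Type*} [AddCommGroup L] [Module ℝ L]
    (δ : L →ₗ[ℝ] TensorProduct ℝ L L) : Prop :=
  (∀ ξ η, dualBr δ ξ η = - dualBr δ η ξ) ∧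
  (∀ ξ η ζ, dualBr δ (dualBr δ ξ η) ζ + dualBr δ (dualBr δ η ζ) ξ
      + dualBr δ (dualBr δ ζ ξ) η = 0)

/-- Convergence in a finite-dimensional real vector space, expressed via all linear
functionals (equivalent to convergence in the norm topology in finite dimension). -/
def WeakTendsto {V : Type*} [AddCommGroup V] [Module ℝ V]
    (f : ℝ → V) (l : Filter ℝ) (A : V) : Prop :=
  ∀ g : Module.Dual ℝ V, Tendsto (fun t => g (f t)) l (nhds (g A))

section Aux

variable {L : Type*} [AddCommGroup L] [Module ℝ L]

lemma adT_tmul (br : L →ₗ[ℝ] L →ₗ[ℝ] L) (X a b : L) :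
    adT br X (a ⊗ₜ[ℝ] b) = br X a ⊗ₜ[ℝ] b + a ⊗ₜ[ℝ] br X b := by
  simp [adT]

lemma lift_tmul' (ξ ζ : Module.Dual ℝ L) (a b : L) :
    TensorProduct.lift ((LinearMap.mul ℝ ℝ).compl₁₂ ξ ζ) (a ⊗ₜ[ℝ] b) = ξ a * ζ b := by
  simp

lemma dualBr_apply (δ : L →ₗ[ℝ] TensorProduct ℝ L L) (ξ ζ : Module.Dual ℝ L) (X : L) :
    dualBr δ ξ ζ X = TensorProduct.lift ((LinearMap.mul ℝ ℝ).compl₁₂ ξ ζ) (δ X) := rfl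

lemma lift_comm' (ξ ζ : Module.Dual ℝ L) (t : TensorProduct ℝ L L) :
    TensorProduct.lift ((LinearMap.mul ℝ ℝ).compl₁₂ ξ ζ) (TensorProduct.comm ℝ L L t)
      = TensorProduct.lift ((LinearMap.mul ℝ ℝ).compl₁₂ ζ ξ) t := by
  induction t using TensorProduct.induction_on with
  | zero => simp
  | tmul a b => simp [mul_comm]
  | add x y hx hy => simp [hx, hy]

lemma lift_map' (ξ ζ : Module.Dual ℝ L) (P : L →ₗ[ℝ] L) (t : TensorProduct ℝ L L) :
    TensorProduct.lift ((LinearMap.mul ℝ ℝ).compl₁₂ ξ ζ) (TensorProduct.map P P t)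
      = TensorProduct.lift ((LinearMap.mul ℝ ℝ).compl₁₂ (ξ ∘ₗ P) (ζ ∘ₗ P)) t := by
  induction t using TensorProduct.induction_on with
  | zero => simp
  | tmul a b => simp
  | add x y hx hy => simp [hx, hy]

lemma lift_smul_left' (c : ℝ) (ξ ζ : Module.Dual ℝ L) (t : TensorProduct ℝ L L) :
    TensorProduct.lift ((LinearMap.mul ℝ ℝ).compl₁₂ (c • ξ) ζ) t
      = c * TensorProduct.lift ((LinearMap.mul ℝ ℝ).compl₁₂ ξ ζ) t := by
  induction t using TensorProduct.induction_on with
  | zero => simp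
  | tmul a b => simp [mul_assoc]
  | add x y hx hy => simp [hx, hy]; ring

lemma comm_map' (P : L →ₗ[ℝ] L) (t : TensorProduct ℝ L L) :
    TensorProduct.comm ℝ L L (TensorProduct.map P P t)
      = TensorProduct.map P P (TensorProduct.comm ℝ L L t) := by
  induction t using TensorProduct.induction_on with
  | zero => simp
  | tmul a b => simp
  | add x y hx hy => simp [hx, hy]

lemma dualBr_smul_left (δ : L →ₗ[ℝ] TensorProduct ℝ L L) (c : ℝ) (ξ ζ : Module.Dual ℝ L) :
    dualBr δ (c • ξ) ζ = c • dualBr δ ξ ζ := by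
  apply LinearMap.ext; intro X
  simp [dualBr_apply, lift_smul_left', smul_eq_mul]

lemma dualBr_conj (δ : L →ₗ[ℝ] TensorProduct ℝ L L) (φe : L ≃ₗ[ℝ] L) (c : ℝ)
    (ξ ζ : Module.Dual ℝ L) :
    dualBr (c • ((TensorProduct.map φe.symm.toLinearMap φe.symm.toLinearMap).comp
        (δ.comp φe.toLinearMap))) ξ ζ
      = c • ((dualBr δ (ξ ∘ₗ φe.symm.toLinearMap) (ζ ∘ₗ φe.symm.toLinearMap))
          ∘ₗ φe.toLinearMap) := by
  apply LinearMap.ext; intro X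
  simp [dualBr_apply, lift_map']

lemma jacobi_conj (δ : L →ₗ[ℝ] TensorProduct ℝ L L) (hcoj : CoJacobi δ)
    (φe : L ≃ₗ[ℝ] L) (c : ℝ) (ξ ζ θ : Module.Dual ℝ L) :
    dualBr (c • ((TensorProduct.map φe.symm.toLinearMap φe.symm.toLinearMap).comp
        (δ.comp φe.toLinearMap))) (dualBr (c • ((TensorProduct.map φe.symm.toLinearMap
        φe.symm.toLinearMap).comp (δ.comp φe.toLinearMap))) ξ ζ) θ
      + dualBr (c • ((TensorProduct.map φe.symm.toLinearMap φe.symm.toLinearMap).comp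
        (δ.comp φe.toLinearMap))) (dualBr (c • ((TensorProduct.map φe.symm.toLinearMap
        φe.symm.toLinearMap).comp (δ.comp φe.toLinearMap))) ζ θ) ξ
      + dualBr (c • ((TensorProduct.map φe.symm.toLinearMap φe.symm.toLinearMap).comp
        (δ.comp φe.toLinearMap))) (dualBr (c • ((TensorProduct.map φe.symm.toLinearMap
        φe.symm.toLinearMap).comp (δ.comp φe.toLinearMap))) θ ξ) ζ = 0 := by
  set F := c • ((TensorProduct.map φe.symm.toLinearMap φe.symm.toLinearMap).comp
      (δ.comp φe.toLinearMap)) with hF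
  have hQP : ∀ β : Module.Dual ℝ L, (β ∘ₗ φe.toLinearMap) ∘ₗ φe.symm.toLinearMap = β := by
    intro β; apply LinearMap.ext; intro X; simp
  have key : ∀ ξ' ζ' θ' : Module.Dual ℝ L,
      dualBr F (dualBr F ξ' ζ') θ'
        = (c * c) • ((dualBr δ (dualBr δ (ξ' ∘ₗ φe.symm.toLinearMap) (ζ' ∘ₗ φe.symm.toLinearMap))
            (θ' ∘ₗ φe.symm.toLinearMap)) ∘ₗ φe.toLinearMap) := by
    intro ξ' ζ' θ'
    rw [hF, dualBr_conj, dualBr_conj]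
    rw [LinearMap.smul_comp, hQP]
    rw [dualBr_smul_left]
    apply LinearMap.ext; intro Z
    simp [smul_smul, mul_assoc]
  rw [key, key, key, ← smul_add, ← smul_add, ← LinearMap.add_comp, ← LinearMap.add_comp]
  rw [hcoj.2 (ξ ∘ₗ φe.symm.toLinearMap) (ζ ∘ₗ φe.symm.toLinearMap) (θ ∘ₗ φe.symm.toLinearMap)]
  simp

lemma map_adT (br : L →ₗ[ℝ] L →ₗ[ℝ] L) (φe : L ≃ₗ[ℝ] L) (X : L) (t : TensorProduct ℝ L L) :
    TensorProduct.map φe.symm.toLinearMap φe.symm.toLinearMap (adT br (φe X) t)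
      = adT ((br.compl₁₂ φe.toLinearMap φe.toLinearMap).compr₂ φe.symm.toLinearMap) X
          (TensorProduct.map φe.symm.toLinearMap φe.symm.toLinearMap t) := by
  induction t using TensorProduct.induction_on with
  | zero => simp
  | tmul a b => simp [adT_tmul]
  | add x y hx hy => simp only [map_add, hx, hy]

lemma cocycle_conj (br : L →ₗ[ℝ] L →ₗ[ℝ] L) (δ : L →ₗ[ℝ] TensorProduct ℝ L L)
    (hcc : ∀ X Y : L, δ (br X Y) = adT br X (δ Y) - adT br Y (δ X))
    (φe : L ≃ₗ[ℝ] L) (c : ℝ) (X Y : L) :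
    (c • ((TensorProduct.map φe.symm.toLinearMap φe.symm.toLinearMap).comp
        (δ.comp φe.toLinearMap)))
      (((br.compl₁₂ φe.toLinearMap φe.toLinearMap).compr₂ φe.symm.toLinearMap) X Y)
      = adT ((br.compl₁₂ φe.toLinearMap φe.toLinearMap).compr₂ φe.symm.toLinearMap) X
          ((c • ((TensorProduct.map φe.symm.toLinearMap φe.symm.toLinearMap).comp
            (δ.comp φe.toLinearMap))) Y)
        - adT ((br.compl₁₂ φe.toLinearMap φe.toLinearMap).compr₂ φe.symm.toLinearMap) Y
          ((c • ((TensorProduct.map φe.symm.toLinearMap φe.symm.toLinearMap).comp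
            (δ.comp φe.toLinearMap))) X) := by
  have h1 : δ (φe (φe.symm (br (φe X) (φe Y)))) = δ (br (φe X) (φe Y)) := by simp
  simp only [LinearMap.smul_apply, LinearMap.comp_apply, LinearMap.compr₂_apply,
    LinearMap.compl₁₂_apply, LinearEquiv.coe_coe, h1, hcc (φe X) (φe Y), map_sub,
    map_adT br φe, map_smul, ← smul_sub]

end Aux

section FD

lemma dual_ext {V : Type*} [AddCommGroup V] [Module ℝ V] {a b : V}
    (h : ∀ g : Module.Dual ℝ V, g a = g b) : a = b := by
  rw [← sub_eq_zero]
  rw [← Module.forall_dual_apply_eq_zero_iff ℝ (a - b)]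
  intro g; simp [h g]

lemma scalar_combo {V : Type*} [AddCommGroup V] [Module ℝ V] [FiniteDimensional ℝ V]
    {l : Filter ℝ} (g : ℝ → Module.Dual ℝ V) (g₀ : Module.Dual ℝ V)
    (hg : ∀ v : V, Tendsto (fun t => g t v) l (nhds (g₀ v)))
    (f : ℝ → V) (A : V)
    (hf : ∀ c : Module.Dual ℝ V, Tendsto (fun t => c (f t)) l (nhds (c A))) :
    Tendsto (fun t => g t (f t)) l (nhds (g₀ A)) := by
  classical
  let b := Module.finBasis ℝ V
  have hrepr : ∀ (G : Module.Dual ℝ V) (v : V), G v = ∑ i, b.coord i v * G (b i) := by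
    intro G v
    conv_lhs => rw [← b.sum_repr v]
    rw [map_sum]
    exact Finset.sum_congr rfl fun i _ => by simp [Module.Basis.coord_apply, smul_eq_mul]
  have h0 : g₀ A = ∑ i, b.coord i A * g₀ (b i) := hrepr g₀ A
  rw [h0]
  refine Tendsto.congr (fun t => (hrepr (g t) (f t)).symm) ?_
  exact tendsto_finset_sum _ fun i _ => (hf (b.coord i)).mul (hg (b i))

end FD

/-- The contraction of a Lie bialgebra is a Lie bialgebra: if the
contracted bracket `B` and the renormalized limit `η'(X) = lim_{ε→0⁺} ε^n (φ_ε⁻¹ ⊗ φ_ε⁻¹)(η(φ_ε X))`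
both exist, then `η'` is linear with skew-symmetric values, a 1-cocycle for `B`, and
satisfies the co-Jacobi condition. -/
theorem statement1
    {L : Type*} [NormedAddCommGroup L] [NormedSpace ℝ L] [FiniteDimensional ℝ L]
    (br : L →ₗ[ℝ] L →ₗ[ℝ] L)
    (hanti : ∀ X Y : L, br X Y = - br Y X)
    (hjac : ∀ X Y Z : L, br (br X Y) Z + br (br Y Z) X + br (br Z X) Y = 0)
    (η : L →ₗ[ℝ] TensorProduct ℝ L L)
    (hskew : ∀ X : L, TensorProduct.comm ℝ L L (η X) = - η X)
    (hcocycle : ∀ X Y : L, η (br X Y) = adT br X (η Y) - adT br Y (η X))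
    (hcojac : CoJacobi η)
    (φ : ℝ → (L ≃ₗ[ℝ] L))
    (B : L → L → L)
    (hB : ∀ X Y : L,
      Tendsto (fun ε : ℝ => (φ ε).symm (br (φ ε X) (φ ε Y)))
        (nhdsWithin (0 : ℝ) (Set.Ioi 0)) (nhds (B X Y)))
    (n : ℝ)
    (η' : L → TensorProduct ℝ L L)
    (hη' : ∀ X : L,
      WeakTendsto
        (fun ε : ℝ => (ε ^ n) •
          (TensorProduct.map (φ ε).symm.toLinearMap (φ ε).symm.toLinearMap (η (φ ε X))))
        (nhdsWithin (0 : ℝ) (Set.Ioi 0)) (η' X)) :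
    ∃ (Bl : L →ₗ[ℝ] L →ₗ[ℝ] L) (η'l : L →ₗ[ℝ] TensorProduct ℝ L L),
      (∀ X Y : L, Bl X Y = B X Y) ∧
      (∀ X : L, η'l X = η' X) ∧
      (∀ X : L, TensorProduct.comm ℝ L L (η'l X) = - η'l X) ∧
      (∀ X Y : L, η'l (Bl X Y) = adT Bl X (η'l Y) - adT Bl Y (η'l X)) ∧
      CoJacobi η'l := by
  classical
  set l : Filter ℝ := nhdsWithin (0 : ℝ) (Set.Ioi 0) with hl
  haveI : l.NeBot := by rw [hl]; exact nhdsGT_neBot 0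
  -- the rescaled conjugated cobracket
  set Fε : ℝ → (L →ₗ[ℝ] TensorProduct ℝ L L) := fun ε =>
    (ε ^ n) • ((TensorProduct.map (φ ε).symm.toLinearMap (φ ε).symm.toLinearMap).comp
      (η.comp (φ ε).toLinearMap)) with hFεdef
  have hFε : ∀ (Z : L) (c : Module.Dual ℝ (TensorProduct ℝ L L)),
      Tendsto (fun ε => c (Fε ε Z)) l (nhds (c (η' Z))) := by
    intro Z c
    have h := hη' Z c
    refine h.congr fun ε => ?_
    simp [hFεdef]
  -- the conjugated bracket
  set brε : ℝ → (L →ₗ[ℝ] L →ₗ[ℝ] L) := fun ε =>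
    ((br.compl₁₂ (φ ε).toLinearMap (φ ε).toLinearMap).compr₂ (φ ε).symm.toLinearMap)
    with hbrεdef
  have hbrε : ∀ X Y : L, Tendsto (fun ε => brε ε X Y) l (nhds (B X Y)) := by
    intro X Y
    refine (hB X Y).congr fun ε => ?_
    simp [hbrεdef]
  have hbrεc : ∀ (X Y : L) (c : Module.Dual ℝ L),
      Tendsto (fun ε => c (brε ε X Y)) l (nhds (c (B X Y))) := fun X Y c =>
    ((c.continuous_of_finiteDimensional).tendsto _).comp (hbrε X Y)
  -- bilinearity of B
  have hB1 : ∀ (X X' Y : L), B (X + X') Y = B X Y + B X' Y := by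
    intro X X' Y
    refine tendsto_nhds_unique (hbrε (X + X') Y) ?_
    refine ((hbrε X Y).add (hbrε X' Y)).congr fun ε => ?_
    simp
  have hB2 : ∀ (c : ℝ) (X Y : L), B (c • X) Y = c • B X Y := by
    intro c X Y
    refine tendsto_nhds_unique (hbrε (c • X) Y) ?_
    refine ((hbrε X Y).const_smul c).congr fun ε => ?_
    simp
  have hB3 : ∀ (X Y Y' : L), B X (Y + Y') = B X Y + B X Y' := by
    intro X Y Y'
    refine tendsto_nhds_unique (hbrε X (Y + Y')) ?_
    refine ((hbrε X Y).add (hbrε X Y')).congr fun ε => ?_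
    simp
  have hB4 : ∀ (c : ℝ) (X Y : L), B X (c • Y) = c • B X Y := by
    intro c X Y
    refine tendsto_nhds_unique (hbrε X (c • Y)) ?_
    refine ((hbrε X Y).const_smul c).congr fun ε => ?_
    simp
  set Bl : L →ₗ[ℝ] L →ₗ[ℝ] L := LinearMap.mk₂ ℝ B hB1 hB2 hB3 hB4 with hBldef
  have hBlapp : ∀ X Y : L, Bl X Y = B X Y := fun X Y => rfl
  -- linearity of η'
  have hadd : ∀ X Y : L, η' (X + Y) = η' X + η' Y := by
    intro X Y
    refine dual_ext fun g => ?_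
    refine tendsto_nhds_unique (hFε (X + Y) g) ?_
    have h := (hFε X g).add (hFε Y g)
    rw [map_add]
    refine h.congr fun ε => ?_
    simp
  have hsmul : ∀ (c : ℝ) (X : L), η' (c • X) = c • η' X := by
    intro c X
    refine dual_ext fun g => ?_
    refine tendsto_nhds_unique (hFε (c • X) g) ?_
    have h := (hFε X g).const_smul c
    rw [map_smul]
    refine h.congr fun ε => ?_
    simp
  set η'l : L →ₗ[ℝ] TensorProduct ℝ L L :=
    { toFun := η'
      map_add' := hadd
      map_smul' := fun c X => hsmul c X } with hη'ldef
  have hη'lapp : ∀ X : L, η'l X = η' X := fun X => rfl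
  -- skewness of η'
  have hskew' : ∀ X : L, TensorProduct.comm ℝ L L (η'l X) = - η'l X := by
    intro X
    refine dual_ext fun g => ?_
    have h1 : Tendsto (fun ε => g (TensorProduct.comm ℝ L L (Fε ε X))) l
        (nhds (g (TensorProduct.comm ℝ L L (η' X)))) := by
      have := hFε X (g ∘ₗ (TensorProduct.comm ℝ L L).toLinearMap)
      simpa using this
    have h2 : ∀ ε : ℝ, TensorProduct.comm ℝ L L (Fε ε X) = - Fε ε X := by
      intro ε
      have : Fε ε X = (ε ^ n) • TensorProduct.map (φ ε).symm.toLinearMap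
          (φ ε).symm.toLinearMap (η ((φ ε).toLinearMap X)) := by simp [hFεdef]
      rw [this, map_smul, comm_map', hskew, map_neg, smul_neg]
    have h3 : Tendsto (fun ε => g (TensorProduct.comm ℝ L L (Fε ε X))) l
        (nhds (g (- η' X))) := by
      have := (hFε X g).neg
      rw [map_neg]
      refine this.congr fun ε => ?_
      rw [h2 ε]; simp
    have := tendsto_nhds_unique h1 h3
    simpa [hη'lapp] using this
  -- cocycle for Bl
  have hcocycle' : ∀ X Y : L, η'l (Bl X Y) = adT Bl X (η'l Y) - adT Bl Y (η'l X) := by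
    intro X Y
    refine dual_ext fun g => ?_
    -- LHS limit
    have hL : Tendsto (fun ε => g (Fε ε (brε ε X Y))) l (nhds (g (η'l (B X Y)))) := by
      refine scalar_combo (fun ε => g ∘ₗ Fε ε) (g ∘ₗ η'l) ?_ (fun ε => brε ε X Y) (B X Y) ?_
      · intro v; simpa [hη'lapp] using hFε v g
      · intro c; exact hbrεc X Y c
    -- RHS limits
    have hadTlim : ∀ (X₀ Y₀ : L), Tendsto (fun ε => g (adT (brε ε) X₀ (Fε ε Y₀))) l
        (nhds (g (adT Bl X₀ (η'l Y₀)))) := by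
      intro X₀ Y₀
      refine scalar_combo (fun ε => g ∘ₗ adT (brε ε) X₀) (g ∘ₗ adT Bl X₀) ?_
        (fun ε => Fε ε Y₀) (η' Y₀) ?_
      · intro t
        induction t using TensorProduct.induction_on with
        | zero => simp
        | tmul a b =>
          have e1 : ∀ ε : ℝ, (g ∘ₗ adT (brε ε) X₀) (a ⊗ₜ[ℝ] b)
              = (g ∘ₗ ((TensorProduct.mk ℝ L L).flip b)) (brε ε X₀ a)
                + (g ∘ₗ (TensorProduct.mk ℝ L L a)) (brε ε X₀ b) := by
            intro ε; simp [adT_tmul]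
          have e2 : (g ∘ₗ adT Bl X₀) (a ⊗ₜ[ℝ] b)
              = (g ∘ₗ ((TensorProduct.mk ℝ L L).flip b)) (B X₀ a)
                + (g ∘ₗ (TensorProduct.mk ℝ L L a)) (B X₀ b) := by
            simp [adT_tmul, hBlapp]
          rw [e2]
          exact Tendsto.congr (fun ε => (e1 ε).symm)
            ((hbrεc X₀ a (g ∘ₗ ((TensorProduct.mk ℝ L L).flip b))).add
              (hbrεc X₀ b (g ∘ₗ (TensorProduct.mk ℝ L L a))))
        | add x y hx hy =>
          have e1 : ∀ ε : ℝ, (g ∘ₗ adT (brε ε) X₀) (x + y)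
              = (g ∘ₗ adT (brε ε) X₀) x + (g ∘ₗ adT (brε ε) X₀) y := fun ε => by simp
          rw [show (g ∘ₗ adT Bl X₀) (x + y) = (g ∘ₗ adT Bl X₀) x + (g ∘ₗ adT Bl X₀) y by simp]
          exact Tendsto.congr (fun ε => (e1 ε).symm) (hx.add hy)
      · intro c; exact hFε Y₀ c
    have hR : Tendsto (fun ε => g (Fε ε (brε ε X Y))) l
        (nhds (g (adT Bl X (η'l Y)) - g (adT Bl Y (η'l X)))) := by
      refine ((hadTlim X Y).sub (hadTlim Y X)).congr fun ε => ?_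
      have := cocycle_conj br η hcocycle (φ ε) (ε ^ n) X Y
      rw [← map_sub]
      congr 1
      exact (this).symm
    have := tendsto_nhds_unique hL hR
    rw [hBlapp, this, map_sub]
  refine ⟨Bl, η'l, hBlapp, hη'lapp, hskew', hcocycle', ?_, ?_⟩
  · -- skew-symmetry of the dual bracket
    intro ξ ζ
    apply LinearMap.ext; intro X
    have h := hskew' X
    simp only [dualBr_apply, LinearMap.neg_apply]
    conv_rhs => rw [← lift_comm' ξ ζ (η'l X)]
    rw [h, map_neg, neg_neg]
  · -- Jacobi identity for the dual bracket
    intro ξ ζ θ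
    apply LinearMap.ext; intro X
    -- each double bracket term is a limit
    have hterm : ∀ ξ₁ ξ₂ ξ₃ : Module.Dual ℝ L,
        Tendsto (fun ε => dualBr (Fε ε) (dualBr (Fε ε) ξ₁ ξ₂) ξ₃ X) l
          (nhds (dualBr η'l (dualBr η'l ξ₁ ξ₂) ξ₃ X)) := by
      intro ξ₁ ξ₂ ξ₃
      have : ∀ ε : ℝ, dualBr (Fε ε) (dualBr (Fε ε) ξ₁ ξ₂) ξ₃ X
          = (TensorProduct.lift ((LinearMap.mul ℝ ℝ).compl₁₂ (dualBr (Fε ε) ξ₁ ξ₂) ξ₃))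
            (Fε ε X) := fun ε => rfl
      rw [show dualBr η'l (dualBr η'l ξ₁ ξ₂) ξ₃ X
          = (TensorProduct.lift ((LinearMap.mul ℝ ℝ).compl₁₂ (dualBr η'l ξ₁ ξ₂) ξ₃))
            (η'l X) from rfl]
      refine scalar_combo
        (fun ε => TensorProduct.lift ((LinearMap.mul ℝ ℝ).compl₁₂ (dualBr (Fε ε) ξ₁ ξ₂) ξ₃))
        (TensorProduct.lift ((LinearMap.mul ℝ ℝ).compl₁₂ (dualBr η'l ξ₁ ξ₂) ξ₃)) ?_
        (fun ε => Fε ε X) (η' X) ?_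
      · intro t
        induction t using TensorProduct.induction_on with
        | zero => simp
        | tmul a b =>
          simp only [lift_tmul']
          have h1 : Tendsto (fun ε => dualBr (Fε ε) ξ₁ ξ₂ a) l
              (nhds (dualBr η'l ξ₁ ξ₂ a)) := by
            have := hFε a (TensorProduct.lift ((LinearMap.mul ℝ ℝ).compl₁₂ ξ₁ ξ₂))
            exact this
          exact h1.mul_const (ξ₃ b)
        | add x y hx hy =>
          simp only [map_add]
          exact hx.add hy
      · intro c; exact hFε X c
    have hzero : ∀ ε : ℝ,
        dualBr (Fε ε) (dualBr (Fε ε) ξ ζ) θ X + dualBr (Fε ε) (dualBr (Fε ε) ζ θ) ξ X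
          + dualBr (Fε ε) (dualBr (Fε ε) θ ξ) ζ X = 0 := by
      intro ε
      have := jacobi_conj η hcojac (φ ε) (ε ^ n) ξ ζ θ
      have h2 : Fε ε = (ε ^ n) • ((TensorProduct.map (φ ε).symm.toLinearMap
          (φ ε).symm.toLinearMap).comp (η.comp (φ ε).toLinearMap)) := rfl
      rw [h2]
      have := congrArg (fun (f : Module.Dual ℝ L) => f X) this
      simpa using this
    have hsum : Tendsto (fun ε => dualBr (Fε ε) (dualBr (Fε ε) ξ ζ) θ X
        + dualBr (Fε ε) (dualBr (Fε ε) ζ θ) ξ X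
        + dualBr (Fε ε) (dualBr (Fε ε) θ ξ) ζ X) l
        (nhds (dualBr η'l (dualBr η'l ξ ζ) θ X + dualBr η'l (dualBr η'l ζ θ) ξ X
          + dualBr η'l (dualBr η'l θ ξ) ζ X)) :=
      ((hterm ξ ζ θ).add (hterm ζ θ ξ)).add (hterm θ ξ ζ)
    have := tendsto_nhds_unique hsum (by
      refine tendsto_const_nhds.congr fun ε => (hzero ε).symm)
    simpa using this
end

section
/- Let L be a finite-dimensional real normed vector space with a fixed basis, let η : L → L ⊗ L be a nonzero linear map, and let (φ_ε)_{ε>0} be a family of linear automorphisms of L whose matrix entries in the fixed basis are polynomial functions of ε and which are invertible for all ε > 0. Suppose the L ⊗ L–valued map ε ↦ (φ_ε⁻¹ ⊗ φ_ε⁻¹) ∘ η ∘ φ_ε is not identically zero. Then there exists an integer n₀ such that for every real number n: the limit lim_{ε→0⁺} ε^n (φ_ε⁻¹ ⊗ φ_ε⁻¹) ∘ η ∘ φ_ε exists if and only if n ≥ n₀, and this limit equals zero if and only if n > n₀. -/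
open Filter

section Helpers
open Polynomial

private lemma rpow_tendsto_zero' {m : ℝ} (hm : 0 < m) :
    Tendsto (fun ε : ℝ => ε ^ m) (nhdsWithin 0 (Set.Ioi 0)) (nhds 0) := by
  have h := (Real.continuousAt_rpow_const 0 m (Or.inr hm.le)).tendsto
  rw [Real.zero_rpow hm.ne'] at h
  exact h.mono_left nhdsWithin_le_nhds

private lemma rpow_tendsto_atTop' {m : ℝ} (hm : m < 0) :
    Tendsto (fun ε : ℝ => ε ^ m) (nhdsWithin 0 (Set.Ioi 0)) atTop := by
  have h1 : Tendsto (fun ε : ℝ => ε ^ (-m)) (nhdsWithin 0 (Set.Ioi 0))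
      (nhdsWithin 0 (Set.Ioi 0)) := by
    rw [tendsto_nhdsWithin_iff]
    refine ⟨rpow_tendsto_zero' (by linarith), ?_⟩
    filter_upwards [self_mem_nhdsWithin] with x hx
    exact Real.rpow_pos_of_pos hx _
  refine h1.inv_tendsto_nhdsGT_zero.congr' ?_
  filter_upwards [self_mem_nhdsWithin] with x hx
  simp [Pi.inv_apply, ← Real.rpow_neg (le_of_lt hx)]

private lemma le_of_rpow_tendsto' {m M : ℝ}
    (h : Tendsto (fun ε : ℝ => ε ^ m) (nhdsWithin 0 (Set.Ioi 0)) (nhds M)) : 0 ≤ m := by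
  by_contra hm
  push_neg at hm
  exact not_tendsto_nhds_of_tendsto_atTop (rpow_tendsto_atTop' hm) M h

private lemma lt_of_rpow_tendsto_zero' {m : ℝ}
    (h : Tendsto (fun ε : ℝ => ε ^ m) (nhdsWithin 0 (Set.Ioi 0)) (nhds 0)) : 0 < m := by
  rcases lt_or_ge 0 m with h'|h'
  · exact h'
  exfalso
  have hev : ∀ᶠ ε in nhdsWithin (0:ℝ) (Set.Ioi 0), (1:ℝ) ≤ ε ^ m := by
    filter_upwards [Ioo_mem_nhdsGT_of_mem (by norm_num : (0:ℝ) ∈ Set.Ico (0:ℝ) 1)]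
      with x hx
    calc (1:ℝ) = x ^ (0:ℝ) := by rw [Real.rpow_zero]
    _ ≤ x ^ m := Real.rpow_le_rpow_of_exponent_ge hx.1 hx.2.le h'
  have : (1:ℝ) ≤ 0 := ge_of_tendsto h hev
  linarith

private lemma rpow_tendsto_nonneg' {m : ℝ} (hm : 0 ≤ m) :
    Tendsto (fun ε : ℝ => ε ^ m) (nhdsWithin 0 (Set.Ioi 0))
      (nhds (if m = 0 then 1 else 0)) := by
  rcases eq_or_lt_of_le hm with h|h
  · simp only [← h, if_pos rfl]
    simpa using tendsto_const_nhds.congr (fun x : ℝ => (Real.rpow_zero x).symm)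
  · rw [if_neg h.ne']
    exact rpow_tendsto_zero' h

private lemma scalar_package' (c : ℝ → ℝ) (P Dq : Polynomial ℝ) (hP : P ≠ 0)
    (hD : ∀ ε : ℝ, 0 < ε → Dq.eval ε ≠ 0)
    (hc : ∀ ε : ℝ, 0 < ε → c ε = P.eval ε / (Dq.eval ε) ^ 2) :
    ∃ (ν : ℤ) (s : ℝ → ℝ) (a : ℝ), a ≠ 0 ∧
      Tendsto s (nhdsWithin 0 (Set.Ioi 0)) (nhds a) ∧
      (∀ (n : ℝ) (ε : ℝ), 0 < ε → ε ^ n * c ε = ε ^ (n - (ν : ℝ)) * s ε) := by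
  have hDq : Dq ≠ 0 := fun h => hD 1 one_pos (by simp [h])
  set mP := rootMultiplicity 0 P with hmP
  set mD := rootMultiplicity 0 Dq with hmD
  set QP := P /ₘ (X - C 0) ^ mP with hQP
  set QD := Dq /ₘ (X - C 0) ^ mD with hQD
  have hQP0 : QP.eval 0 ≠ 0 := eval_divByMonic_pow_rootMultiplicity_ne_zero 0 hP
  have hQD0 : QD.eval 0 ≠ 0 := eval_divByMonic_pow_rootMultiplicity_ne_zero 0 hDq
  have eP : ∀ ε : ℝ, P.eval ε = ε ^ mP * QP.eval ε := by
    intro ε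
    conv_lhs => rw [← pow_mul_divByMonic_rootMultiplicity_eq P 0]
    rw [eval_mul, eval_pow, eval_sub, eval_X, eval_C, sub_zero]
  have eD : ∀ ε : ℝ, Dq.eval ε = ε ^ mD * QD.eval ε := by
    intro ε
    conv_lhs => rw [← pow_mul_divByMonic_rootMultiplicity_eq Dq 0]
    rw [eval_mul, eval_pow, eval_sub, eval_X, eval_C, sub_zero]
  refine ⟨2 * mD - mP, fun ε => QP.eval ε / (QD.eval ε) ^ 2,
    QP.eval 0 / (QD.eval 0) ^ 2, div_ne_zero hQP0 (pow_ne_zero _ hQD0), ?_, ?_⟩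
  · have hcont : ContinuousAt (fun ε => QP.eval ε / (QD.eval ε) ^ 2) 0 :=
      (QP.continuousAt).div ((QD.continuousAt).pow 2) (pow_ne_zero _ hQD0)
    exact hcont.tendsto.mono_left nhdsWithin_le_nhds
  · intro n ε hε
    have hQDε : QD.eval ε ≠ 0 := by
      intro h
      exact hD ε hε (by rw [eD ε, h, mul_zero])
    rw [hc ε hε, eP ε, eD ε]
    rw [← Real.rpow_natCast ε mP, ← Real.rpow_natCast ε mD]
    rw [mul_pow, ← Real.rpow_natCast (ε ^ ((mD : ℕ) : ℝ)) 2, ← Real.rpow_mul hε.le]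
    rw [show (n - ((2 * (mD:ℤ) - (mP:ℤ) : ℤ) : ℝ)) = n + (mP:ℝ) - (mD:ℝ) * ((2:ℕ):ℝ) by
      push_cast; ring]
    rw [Real.rpow_sub hε, Real.rpow_add hε]
    have h1 : ε ^ ((mD:ℝ) * ((2:ℕ):ℝ)) ≠ 0 := (Real.rpow_pos_of_pos hε _).ne'
    field_simp

private lemma coord_analysis' (c : ℝ → ℝ) (P Dq : Polynomial ℝ) (hP : P ≠ 0)
    (hD : ∀ ε : ℝ, 0 < ε → Dq.eval ε ≠ 0)
    (hc : ∀ ε : ℝ, 0 < ε → c ε = P.eval ε / (Dq.eval ε) ^ 2) :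
    ∃ ν : ℤ, ∀ n : ℝ,
      (((ν : ℝ) ≤ n) → ∃ v, Tendsto (fun ε => ε ^ n * c ε) (nhdsWithin 0 (Set.Ioi 0)) (nhds v)) ∧
      (((ν : ℝ) < n) → Tendsto (fun ε => ε ^ n * c ε) (nhdsWithin 0 (Set.Ioi 0)) (nhds 0)) ∧
      (∀ v, Tendsto (fun ε => ε ^ n * c ε) (nhdsWithin 0 (Set.Ioi 0)) (nhds v) → (ν : ℝ) ≤ n) ∧
      (Tendsto (fun ε => ε ^ n * c ε) (nhdsWithin 0 (Set.Ioi 0)) (nhds 0) → (ν : ℝ) < n) := by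
  obtain ⟨ν, s, a, ha, hs, hid⟩ := scalar_package' c P Dq hP hD hc
  refine ⟨ν, fun n => ?_⟩
  have heq : (fun ε => ε ^ n * c ε) =ᶠ[nhdsWithin 0 (Set.Ioi 0)]
      (fun ε => ε ^ (n - (ν : ℝ)) * s ε) := by
    filter_upwards [self_mem_nhdsWithin] with ε hε
    exact hid n ε hε
  refine ⟨?_, ?_, ?_, ?_⟩
  · intro hle
    exact ⟨(if n - (ν : ℝ) = 0 then 1 else 0) * a,
      Tendsto.congr' heq.symm ((rpow_tendsto_nonneg' (by linarith)).mul hs)⟩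
  · intro hlt
    refine Tendsto.congr' heq.symm ?_
    have := (rpow_tendsto_zero' (by linarith : (0:ℝ) < n - ν)).mul hs
    simpa using this
  · intro v hv
    have hv' := hv.congr' heq
    have hsne : ∀ᶠ ε in nhdsWithin (0:ℝ) (Set.Ioi 0), s ε ≠ 0 := hs.eventually_ne ha
    have hdiv : Tendsto (fun ε => (ε ^ (n - (ν:ℝ)) * s ε) / s ε)
        (nhdsWithin 0 (Set.Ioi 0)) (nhds (v / a)) := hv'.div hs ha
    have htd : Tendsto (fun ε : ℝ => ε ^ (n - (ν:ℝ))) (nhdsWithin 0 (Set.Ioi 0))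
        (nhds (v / a)) := by
      refine hdiv.congr' ?_
      filter_upwards [hsne] with ε hε
      field_simp
    have := le_of_rpow_tendsto' htd
    linarith
  · intro hv
    have hv' := hv.congr' heq
    have hsne : ∀ᶠ ε in nhdsWithin (0:ℝ) (Set.Ioi 0), s ε ≠ 0 := hs.eventually_ne ha
    have hdiv : Tendsto (fun ε => (ε ^ (n - (ν:ℝ)) * s ε) / s ε)
        (nhdsWithin 0 (Set.Ioi 0)) (nhds ((0:ℝ) / a)) := hv'.div hs ha
    rw [zero_div] at hdiv
    have htd : Tendsto (fun ε : ℝ => ε ^ (n - (ν:ℝ))) (nhdsWithin 0 (Set.Ioi 0)) (nhds 0) := by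
      refine hdiv.congr' ?_
      filter_upwards [hsne] with ε hε
      field_simp
    have := lt_of_rpow_tendsto_zero' htd
    linarith

variable {L : Type*} [NormedAddCommGroup L] [NormedSpace ℝ L] [FiniteDimensional ℝ L]
    {ι : Type*} [Fintype ι] [DecidableEq ι] (b : Module.Basis ι ℝ L)

omit [FiniteDimensional ℝ L] in
private lemma apply_basis_eq_sum' (f : L →ₗ[ℝ] L) (s : ι) :
    f (b s) = ∑ k, (LinearMap.toMatrix b b f) k s • b k := by
  conv_lhs => rw [← Module.Basis.sum_repr b (f (b s))]
  simp [LinearMap.toMatrix_apply]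

omit [FiniteDimensional ℝ L] in
private lemma coord_formula' (η : L →ₗ[ℝ] TensorProduct ℝ L L) (ψ φL : L →ₗ[ℝ] L)
    (k l j : ι) :
    (Module.Basis.tensorProduct b b).repr
        ((TensorProduct.map ψ ψ) (η (φL (b j)))) (k, l) =
      ∑ i, ∑ st : ι × ι,
        (LinearMap.toMatrix b b φL) i j *
        ((Module.Basis.tensorProduct b b).repr (η (b i)) st *
          ((LinearMap.toMatrix b b ψ) k st.1 * (LinearMap.toMatrix b b ψ) l st.2)) := by
  set B := Module.Basis.tensorProduct b b with hB
  set T := LinearMap.toMatrix b b φL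
  set N := LinearMap.toMatrix b b ψ
  have h1 : φL (b j) = ∑ i, T i j • b i := apply_basis_eq_sum' b φL j
  have h2 : ∀ i, η (b i) = ∑ st : ι × ι, B.repr (η (b i)) st • (b st.1 ⊗ₜ[ℝ] b st.2) := by
    intro i
    conv_lhs => rw [← B.sum_repr (η (b i))]
    refine Finset.sum_congr rfl fun st _ => ?_
    rw [Module.Basis.tensorProduct_apply']
  have h3 : ∀ s t : ι, (TensorProduct.map ψ ψ) (b s ⊗ₜ[ℝ] b t) =
      ∑ kl : ι × ι, (N kl.1 s * N kl.2 t) • (b kl.1 ⊗ₜ[ℝ] b kl.2) := by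
    intro s t
    rw [TensorProduct.map_tmul, apply_basis_eq_sum' b ψ s, apply_basis_eq_sum' b ψ t]
    rw [TensorProduct.sum_tmul]
    rw [Fintype.sum_prod_type]
    refine Finset.sum_congr rfl fun k' _ => ?_
    rw [TensorProduct.tmul_sum]
    refine Finset.sum_congr rfl fun l' _ => ?_
    rw [TensorProduct.smul_tmul_smul]
  have h4 : ∀ s t : ι, ∀ kl : ι × ι,
      B.repr ((TensorProduct.map ψ ψ) (b s ⊗ₜ[ℝ] b t)) kl = N kl.1 s * N kl.2 t := by
    intro s t kl
    rw [h3]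
    rw [map_sum, Finset.sum_apply']
    rw [Finset.sum_eq_single kl]
    · rw [map_smul, Finsupp.smul_apply, smul_eq_mul, ← Module.Basis.tensorProduct_apply', hB,
        Module.Basis.repr_self, Finsupp.single_eq_same, mul_one]
    · intro kl' _ hne
      rw [map_smul, Finsupp.smul_apply, smul_eq_mul, ← Module.Basis.tensorProduct_apply', hB,
        Module.Basis.repr_self, Finsupp.single_eq_of_ne hne.symm, mul_zero]
    · intro h; exact absurd (Finset.mem_univ kl) h
  rw [h1, map_sum]
  simp only [map_smul, map_sum, Finsupp.coe_finset_sum, Finset.sum_apply, Finsupp.coe_smul,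
    Pi.smul_apply, smul_eq_mul]
  refine Finset.sum_congr rfl fun i _ => ?_
  have hinner : (B.repr ((TensorProduct.map ψ ψ) (η (b i)))) (k, l) =
      ∑ st : ι × ι, B.repr (η (b i)) st * (N k st.1 * N l st.2) := by
    conv_lhs => rw [h2 i]
    rw [map_sum, map_sum, Finset.sum_apply']
    refine Finset.sum_congr rfl fun st _ => ?_
    rw [map_smul, map_smul, Finsupp.smul_apply, smul_eq_mul, h4 st.1 st.2 (k, l)]
  rw [hinner, Finset.mul_sum]

end Helpers

/-- Existence of the fundamental contraction constant `n₀`: for a nonzero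
linear map `η : L → L ⊗ L` and a family of automorphisms `φ_ε` with polynomial matrix
entries, such that `ε ↦ (φ_ε⁻¹ ⊗ φ_ε⁻¹) ∘ η ∘ φ_ε` is not identically zero, there is an
integer `n₀` such that the limit `lim_{ε→0⁺} ε^n (φ_ε⁻¹ ⊗ φ_ε⁻¹) ∘ η ∘ φ_ε` exists iff
`n ≥ n₀`, and the limit is zero iff `n > n₀`. -/
theorem statement2
    {L : Type*} [NormedAddCommGroup L] [NormedSpace ℝ L] [FiniteDimensional ℝ L]
    {ι : Type*} [Fintype ι] [DecidableEq ι]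
    (b : Module.Basis ι ℝ L)
    (η : L →ₗ[ℝ] TensorProduct ℝ L L) (hη : η ≠ 0)
    (φ : ℝ → (L ≃ₗ[ℝ] L))
    (hpoly : ∀ i j : ι, ∃ p : Polynomial ℝ, ∀ ε : ℝ, 0 < ε →
      LinearMap.toMatrix b b (φ ε).toLinearMap i j = p.eval ε)
    (hnz : ∃ ε : ℝ, 0 < ε ∧
      (TensorProduct.map (φ ε).symm.toLinearMap (φ ε).symm.toLinearMap).comp
        (η.comp (φ ε).toLinearMap) ≠ 0) :
    ∃ n₀ : ℤ, ∀ n : ℝ,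
      ((∃ A : L →ₗ[ℝ] TensorProduct ℝ L L, ∀ X : L,
          WeakTendsto
            (fun ε : ℝ => (ε ^ n) •
              (TensorProduct.map (φ ε).symm.toLinearMap (φ ε).symm.toLinearMap
                (η (φ ε X))))
            (nhdsWithin (0 : ℝ) (Set.Ioi 0)) (A X)) ↔ (n₀ : ℝ) ≤ n) ∧
      ((∀ X : L,
          WeakTendsto
            (fun ε : ℝ => (ε ^ n) •
              (TensorProduct.map (φ ε).symm.toLinearMap (φ ε).symm.toLinearMap
                (η (φ ε X))))
            (nhdsWithin (0 : ℝ) (Set.Ioi 0)) 0) ↔ (n₀ : ℝ) < n) := by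
  classical
  obtain ⟨ε₀, hε₀, hFne⟩ := hnz
  choose p hp using hpoly
  set Mp : Matrix ι ι (Polynomial ℝ) := Matrix.of p with hMpdef
  set D : Polynomial ℝ := Mp.det with hDdef
  set B := Module.Basis.tensorProduct b b with hBdef
  set N : ℝ → Matrix ι ι ℝ :=
    fun ε => LinearMap.toMatrix b b (φ ε).symm.toLinearMap with hNdef
  -- matrix facts
  have hM : ∀ ε : ℝ, 0 < ε →
      LinearMap.toMatrix b b (φ ε).toLinearMap = Mp.map (Polynomial.eval ε) := by
    intro ε hε
    ext i j
    rw [Matrix.map_apply]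
    exact hp i j ε hε
  have hNM : ∀ ε : ℝ, N ε * LinearMap.toMatrix b b (φ ε).toLinearMap = 1 := by
    intro ε
    rw [hNdef, ← LinearMap.toMatrix_comp b b b]
    have hc : (φ ε).symm.toLinearMap ∘ₗ (φ ε).toLinearMap = LinearMap.id := by
      ext x; simp
    rw [hc, LinearMap.toMatrix_id]
  have hMN : ∀ ε : ℝ, LinearMap.toMatrix b b (φ ε).toLinearMap * N ε = 1 := by
    intro ε
    rw [hNdef, ← LinearMap.toMatrix_comp b b b]
    have hc : (φ ε).toLinearMap ∘ₗ (φ ε).symm.toLinearMap = LinearMap.id := by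
      ext x; simp
    rw [hc, LinearMap.toMatrix_id]
  have hDeval : ∀ ε : ℝ, 0 < ε → (Mp.map (Polynomial.eval ε)).det = D.eval ε := by
    intro ε hε
    rw [hDdef]
    have := (Polynomial.evalRingHom ε).map_det Mp
    simp only [RingHom.mapMatrix_apply, Polynomial.coe_evalRingHom] at this
    exact this.symm
  have hdet : ∀ ε : ℝ, 0 < ε → D.eval ε ≠ 0 := by
    intro ε hε h0
    have h1 : (LinearMap.toMatrix b b (φ ε).toLinearMap).det * (N ε).det = 1 := by
      rw [← Matrix.det_mul, hMN ε, Matrix.det_one]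
    rw [hM ε hε, hDeval ε hε, h0, zero_mul] at h1
    exact zero_ne_one h1
  have hadj : ∀ ε : ℝ, 0 < ε → ∀ k s : ι,
      (Mp.adjugate k s).eval ε = D.eval ε * N ε k s := by
    intro ε hε
    have hNMε : N ε * Mp.map (Polynomial.eval ε) = 1 := by
      rw [← hM ε hε]; exact hNM ε
    have h1 : (Mp.map (Polynomial.eval ε)).adjugate = D.eval ε • N ε := by
      calc (Mp.map (Polynomial.eval ε)).adjugate
          = (N ε * Mp.map (Polynomial.eval ε)) * (Mp.map (Polynomial.eval ε)).adjugate := by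
            rw [hNMε, Matrix.one_mul]
        _ = N ε * ((Mp.map (Polynomial.eval ε)) * (Mp.map (Polynomial.eval ε)).adjugate) := by
            rw [Matrix.mul_assoc]
        _ = N ε * ((Mp.map (Polynomial.eval ε)).det • (1 : Matrix ι ι ℝ)) := by
            rw [Matrix.mul_adjugate]
        _ = D.eval ε • N ε := by
            rw [Matrix.mul_smul, Matrix.mul_one, hDeval ε hε]
    have h2 : (Mp.adjugate).map (Polynomial.eval ε) = (Mp.map (Polynomial.eval ε)).adjugate := by
      have := (Polynomial.evalRingHom ε).map_adjugate Mp
      simpa only [RingHom.mapMatrix_apply, Polynomial.coe_evalRingHom] using this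
    intro k s
    have h3 := congrFun (congrFun (h2.trans h1) k) s
    simpa only [Matrix.map_apply, Matrix.smul_apply, smul_eq_mul] using h3
  -- coordinate functions
  set c : (ι × ι) → ι → ℝ → ℝ := fun kl j ε =>
    B.repr ((TensorProduct.map (φ ε).symm.toLinearMap (φ ε).symm.toLinearMap)
      (η (φ ε (b j)))) kl with hcdef
  set Pl : (ι × ι) → ι → Polynomial ℝ := fun kl j =>
    ∑ i, ∑ st : ι × ι, Polynomial.C (B.repr (η (b i)) st) * Mp i j *
      (Mp.adjugate kl.1 st.1) * (Mp.adjugate kl.2 st.2) with hPldef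
  have hkey : ∀ (kl : ι × ι) (j : ι) (ε : ℝ), 0 < ε →
      c kl j ε = (Pl kl j).eval ε / (D.eval ε) ^ 2 := by
    rintro ⟨k, l⟩ j ε hε
    rw [eq_div_iff (pow_ne_zero 2 (hdet ε hε))]
    have hform := coord_formula' b η (φ ε).symm.toLinearMap (φ ε).toLinearMap k l j
    rw [hM ε hε] at hform
    have hc1 : c (k, l) j ε = ∑ i, ∑ st : ι × ι,
        (Mp i j).eval ε * (B.repr (η (b i)) st * (N ε k st.1 * N ε l st.2)) := by
      simp only [Matrix.map_apply] at hform
      exact hform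
    have hPl1 : (Pl (k, l) j).eval ε = ∑ i, ∑ st : ι × ι,
        (B.repr (η (b i)) st) * (Mp i j).eval ε *
          (D.eval ε * N ε k st.1) * (D.eval ε * N ε l st.2) := by
      rw [hPldef]
      simp only [Polynomial.eval_finset_sum, Polynomial.eval_mul, Polynomial.eval_C]
      refine Finset.sum_congr rfl fun i _ => Finset.sum_congr rfl fun st _ => ?_
      rw [hadj ε hε k st.1, hadj ε hε l st.2]
    rw [hc1, hPl1, Finset.sum_mul]
    refine Finset.sum_congr rfl fun i _ => ?_
    rw [Finset.sum_mul]
    refine Finset.sum_congr rfl fun st _ => ?_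
    ring
  -- per-coordinate analysis
  have hcoord : ∀ q : (ι × ι) × ι, ∃ ν : ℤ, Pl q.1 q.2 ≠ 0 → ∀ n : ℝ,
      (((ν : ℝ) ≤ n) → ∃ v, Tendsto (fun ε => ε ^ n * c q.1 q.2 ε)
        (nhdsWithin 0 (Set.Ioi 0)) (nhds v)) ∧
      (((ν : ℝ) < n) → Tendsto (fun ε => ε ^ n * c q.1 q.2 ε)
        (nhdsWithin 0 (Set.Ioi 0)) (nhds 0)) ∧
      (∀ v, Tendsto (fun ε => ε ^ n * c q.1 q.2 ε)
        (nhdsWithin 0 (Set.Ioi 0)) (nhds v) → (ν : ℝ) ≤ n) ∧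
      (Tendsto (fun ε => ε ^ n * c q.1 q.2 ε)
        (nhdsWithin 0 (Set.Ioi 0)) (nhds 0) → (ν : ℝ) < n) := by
    intro q
    by_cases hq : Pl q.1 q.2 = 0
    · exact ⟨0, fun h => absurd hq h⟩
    · obtain ⟨ν, hν⟩ := coord_analysis' (c q.1 q.2) (Pl q.1 q.2) D hq hdet (hkey q.1 q.2)
      exact ⟨ν, fun _ => hν⟩
  choose ν hν using hcoord
  have hzero : ∀ q : (ι × ι) × ι, Pl q.1 q.2 = 0 → ∀ n : ℝ,
      Tendsto (fun ε => ε ^ n * c q.1 q.2 ε) (nhdsWithin 0 (Set.Ioi 0)) (nhds 0) := by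
    intro q hq n
    refine Tendsto.congr' ?_ tendsto_const_nhds
    filter_upwards [self_mem_nhdsWithin] with ε hε
    rw [hkey q.1 q.2 ε hε, hq]
    simp
  -- nonemptiness
  have hSne : ∃ q : (ι × ι) × ι, Pl q.1 q.2 ≠ 0 := by
    by_contra hall
    push_neg at hall
    apply hFne
    apply Module.Basis.ext b
    intro j
    rw [LinearMap.comp_apply, LinearMap.comp_apply, LinearMap.zero_apply]
    rw [← LinearEquiv.map_eq_zero_iff B.repr]
    ext kl
    have h0 : c kl j ε₀ = 0 := by
      rw [hkey kl j ε₀ hε₀, hall (kl, j)]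
      simp
    simpa using h0
  obtain ⟨q₀, hq₀⟩ := hSne
  set S : Finset ((ι × ι) × ι) := Finset.univ.filter (fun q => Pl q.1 q.2 ≠ 0) with hSdef
  have hmemS : ∀ q, q ∈ S ↔ Pl q.1 q.2 ≠ 0 := by
    intro q; simp [hSdef]
  have hS : S.Nonempty := ⟨q₀, (hmemS q₀).2 hq₀⟩
  obtain ⟨qmax, hqmaxS, hqmax⟩ := Finset.exists_mem_eq_sup' hS ν
  have hqmaxne : Pl qmax.1 qmax.2 ≠ 0 := (hmemS qmax).1 hqmaxS
  refine ⟨S.sup' hS ν, fun n => ?_⟩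
  -- extraction of coordinates from weak convergence
  have hextract : ∀ (q : (ι × ι) × ι) (w : TensorProduct ℝ L L),
      WeakTendsto
        (fun ε : ℝ => (ε ^ n) •
          (TensorProduct.map (φ ε).symm.toLinearMap (φ ε).symm.toLinearMap
            (η (φ ε (b q.2)))))
        (nhdsWithin (0 : ℝ) (Set.Ioi 0)) w →
      Tendsto (fun ε => ε ^ n * c q.1 q.2 ε) (nhdsWithin 0 (Set.Ioi 0))
        (nhds (B.coord q.1 w)) := by
    intro q w h
    have h1 := h (B.coord q.1)
    refine h1.congr fun t => ?_
    rw [map_smul, smul_eq_mul, Module.Basis.coord_apply]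
  -- assembly of weak limits from coordinate limits
  have hassemble : ∀ v : ((ι × ι) × ι) → ℝ,
      (∀ q, Tendsto (fun ε => ε ^ n * c q.1 q.2 ε) (nhdsWithin 0 (Set.Ioi 0)) (nhds (v q))) →
      ∀ X : L, WeakTendsto
        (fun ε : ℝ => (ε ^ n) •
          (TensorProduct.map (φ ε).symm.toLinearMap (φ ε).symm.toLinearMap
            (η (φ ε X))))
        (nhdsWithin (0 : ℝ) (Set.Ioi 0))
        ((b.constr ℝ (fun j => ∑ kl : ι × ι, v (kl, j) • B kl)) X) := by
    intro v hv X g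
    have hpt : ∀ ε : ℝ,
        g ((ε ^ n) • (TensorProduct.map (φ ε).symm.toLinearMap (φ ε).symm.toLinearMap
          (η (φ ε X)))) =
        ∑ j, ∑ kl : ι × ι, (b.repr X j * g (B kl)) * (ε ^ n * c kl j ε) := by
      intro ε
      have h1 : TensorProduct.map (φ ε).symm.toLinearMap (φ ε).symm.toLinearMap
          (η (φ ε X)) =
          ∑ j, b.repr X j • (TensorProduct.map (φ ε).symm.toLinearMap
            (φ ε).symm.toLinearMap (η (φ ε (b j)))) := by
        conv_lhs => rw [← b.sum_repr X]
        rw [map_sum, map_sum, map_sum]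
        refine Finset.sum_congr rfl fun j _ => ?_
        rw [map_smul, map_smul, map_smul]
      have h2 : ∀ j, TensorProduct.map (φ ε).symm.toLinearMap (φ ε).symm.toLinearMap
          (η (φ ε (b j))) = ∑ kl : ι × ι, c kl j ε • B kl :=
        fun j => (B.sum_repr _).symm
      rw [h1, Finset.smul_sum, map_sum]
      refine Finset.sum_congr rfl fun j _ => ?_
      rw [h2 j, Finset.smul_sum, Finset.smul_sum, map_sum]
      refine Finset.sum_congr rfl fun kl _ => ?_
      rw [smul_smul, smul_smul, map_smul, smul_eq_mul]
      ring
    have hlim := tendsto_finset_sum (Finset.univ : Finset ι)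
      (fun j _ => tendsto_finset_sum (Finset.univ : Finset (ι × ι))
        (fun kl _ => (hv (kl, j)).const_mul (b.repr X j * g (B kl))))
    have hfinal := hlim.congr (fun ε => (hpt ε).symm)
    have hval : g ((b.constr ℝ (fun j => ∑ kl : ι × ι, v (kl, j) • B kl)) X) =
        ∑ j, ∑ kl : ι × ι, (b.repr X j * g (B kl)) * v (kl, j) := by
      rw [Module.Basis.constr_apply_fintype, map_sum]
      refine Finset.sum_congr rfl fun j _ => ?_
      rw [map_smul, map_sum, Module.Basis.equivFun_apply, smul_eq_mul, Finset.mul_sum]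
      refine Finset.sum_congr rfl fun kl _ => ?_
      rw [map_smul, smul_eq_mul]
      ring
    rw [hval]
    exact hfinal
  constructor
  · constructor
    · rintro ⟨A, hA⟩
      have hext := hextract qmax _ (hA (b qmax.2))
      have hle := ((hν qmax hqmaxne n).2.2.1) _ hext
      rw [hqmax]
      exact hle
    · intro hle
      have hvq : ∀ q : (ι × ι) × ι, ∃ v, Tendsto (fun ε => ε ^ n * c q.1 q.2 ε)
          (nhdsWithin 0 (Set.Ioi 0)) (nhds v) := by
        intro q
        by_cases hq : Pl q.1 q.2 = 0
        · exact ⟨0, hzero q hq n⟩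
        · refine (hν q hq n).1 ?_
          have h1 : ν q ≤ S.sup' hS ν := Finset.le_sup' ν ((hmemS q).2 hq)
          have h2 : ((ν q : ℤ) : ℝ) ≤ ((S.sup' hS ν : ℤ) : ℝ) := by exact_mod_cast h1
          linarith
      choose v hv using hvq
      exact ⟨_, hassemble v hv⟩
  · constructor
    · intro hA
      have hext := hextract qmax _ (hA (b qmax.2))
      rw [map_zero] at hext
      have hlt := ((hν qmax hqmaxne n).2.2.2) hext
      rw [hqmax]
      exact hlt
    · intro hlt
      have hvq : ∀ q : (ι × ι) × ι, Tendsto (fun ε => ε ^ n * c q.1 q.2 ε)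
          (nhdsWithin 0 (Set.Ioi 0)) (nhds 0) := by
        intro q
        by_cases hq : Pl q.1 q.2 = 0
        · exact hzero q hq n
        · refine (hν q hq n).2.1 ?_
          have h1 : ν q ≤ S.sup' hS ν := Finset.le_sup' ν ((hmemS q).2 hq)
          have h2 : ((ν q : ℤ) : ℝ) ≤ ((S.sup' hS ν : ℤ) : ℝ) := by exact_mod_cast h1
          linarith
      intro X
      have h := hassemble (fun _ => 0) hvq X
      have hA0 : (b.constr ℝ (fun j => ∑ kl : ι × ι, (0:ℝ) • B kl)) X = 0 := by
        simp
      rw [hA0] at h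
      exact h
end

section
/- Let 𝔭 be the (1+1) Poincaré Lie algebra, let ω ∈ ℝ, and let δ : 𝔭 → 𝔭 ⊗ 𝔭 be the linear map defined by δ(P₀)=0, δ(P₁)=ω P₁∧P₀, δ(K)=ω K∧P₀ (the (1+1) timelike κ-Poincaré cocommutator). Let φ_c (c > 0) be the linear automorphisms defined by φ_c(P₀)=P₀, φ_c(P₁)=c⁻¹P₁, φ_c(K)=c⁻¹K. Then for every c > 0 one has (φ_c⁻¹ ⊗ φ_c⁻¹) ∘ δ ∘ φ_c = δ; in particular the contraction limit lim_{c→+∞} (φ_c⁻¹ ⊗ φ_c⁻¹) ∘ δ ∘ φ_c exists (with fundamental contraction constant n₀ = 0) and equals δ itself, and δ is a 1-cocycle with skew-symmetric values satisfying the co-Jacobi condition for the contracted Galilei bracket [P₀,P₁]=0, [K,P₀]=P₁, [K,P₁]=0 (the (1+1) timelike κ-Galilei cocommutator). -/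
open Filter

/-- The wedge `X ∧ Y = X ⊗ Y - Y ⊗ X` in `L ⊗ L`. -/
noncomputable def wedge {L : Type*} [AddCommGroup L] [Module ℝ L] (X Y : L) :
    TensorProduct ℝ L L := X ⊗ₜ[ℝ] Y - Y ⊗ₜ[ℝ] X

/-- Contraction of the (1+1) timelike κ-Poincaré cocommutator.  The
(1+1) Poincaré Lie algebra has basis `P₀ = b 0`, `P₁ = b 1`, `K = b 2` with brackets
`[P₀,P₁]=0`, `[K,P₀]=P₁`, `[K,P₁]=P₀`; `δ(P₀)=0`, `δ(P₁)=ω P₁∧P₀`, `δ(K)=ω K∧P₀`; and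
`φ_c(P₀)=P₀`, `φ_c(P₁)=c⁻¹P₁`, `φ_c(K)=c⁻¹K`.  Then `(φ_c⁻¹⊗φ_c⁻¹)∘δ∘φ_c = δ` for all
`c > 0`, the contraction limit exists and equals `δ`, and `δ` is a skew-symmetric-valued
1-cocycle satisfying the co-Jacobi condition for the contracted Galilei bracket `Bg`
(determined by `Bg(P₀,P₁)=0`, `Bg(K,P₀)=P₁`, `Bg(K,P₁)=0` and antisymmetry). -/
theorem statement4
    {L : Type*} [NormedAddCommGroup L] [NormedSpace ℝ L] [FiniteDimensional ℝ L]
    (br : L →ₗ[ℝ] L →ₗ[ℝ] L)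
    (hanti : ∀ X Y : L, br X Y = - br Y X)
    (hjac : ∀ X Y Z : L, br (br X Y) Z + br (br Y Z) X + br (br Z X) Y = 0)
    (b : Module.Basis (Fin 3) ℝ L)
    (hbr01 : br (b 0) (b 1) = 0)
    (hbr20 : br (b 2) (b 0) = b 1)
    (hbr21 : br (b 2) (b 1) = b 0)
    (ω : ℝ)
    (δ : L →ₗ[ℝ] TensorProduct ℝ L L)
    (hδ0 : δ (b 0) = 0)
    (hδ1 : δ (b 1) = ω • wedge (b 1) (b 0))
    (hδ2 : δ (b 2) = ω • wedge (b 2) (b 0))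
    (φ : ℝ → (L ≃ₗ[ℝ] L))
    (hφ : ∀ c : ℝ, 0 < c →
      φ c (b 0) = b 0 ∧ φ c (b 1) = c⁻¹ • b 1 ∧ φ c (b 2) = c⁻¹ • b 2)
    (Bg : L →ₗ[ℝ] L →ₗ[ℝ] L)
    (hBganti : ∀ X Y : L, Bg X Y = - Bg Y X)
    (hBg01 : Bg (b 0) (b 1) = 0)
    (hBg20 : Bg (b 2) (b 0) = b 1)
    (hBg21 : Bg (b 2) (b 1) = 0) :
    (∀ c : ℝ, 0 < c →
      (TensorProduct.map (φ c).symm.toLinearMap (φ c).symm.toLinearMap).comp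
        (δ.comp (φ c).toLinearMap) = δ) ∧
    (∀ X : L,
      WeakTendsto
        (fun c : ℝ =>
          TensorProduct.map (φ c).symm.toLinearMap (φ c).symm.toLinearMap (δ (φ c X)))
        atTop (δ X)) ∧
    (∀ X : L, TensorProduct.comm ℝ L L (δ X) = - δ X) ∧
    (∀ X Y : L, δ (Bg X Y) = adT Bg X (δ Y) - adT Bg Y (δ X)) ∧
    CoJacobi δ := by

  -- auxiliary bracket values
  have hdiag : ∀ X : L, Bg X X = 0 := by
    intro X
    have h := hBganti X X
    have h2 : (2 : ℝ) • Bg X X = 0 := by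
      rw [two_smul]
      exact add_eq_zero_iff_eq_neg.mpr h
    rcases smul_eq_zero.mp h2 with h' | h'
    · norm_num at h'
    · exact h'
  have hBg10 : Bg (b 1) (b 0) = 0 := by rw [hBganti, hBg01, neg_zero]
  have hBg02 : Bg (b 0) (b 2) = - b 1 := by rw [hBganti, hBg20]
  have hBg12 : Bg (b 1) (b 2) = 0 := by rw [hBganti, hBg21, neg_zero]
  -- part 1
  have part1 : ∀ c : ℝ, 0 < c →
      (TensorProduct.map (φ c).symm.toLinearMap (φ c).symm.toLinearMap).comp
        (δ.comp (φ c).toLinearMap) = δ := by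
    intro c hc
    obtain ⟨h0, h1, h2⟩ := hφ c hc
    have hcne : c ≠ 0 := hc.ne'
    have s0 : (φ c).symm (b 0) = b 0 := by rw [LinearEquiv.symm_apply_eq, h0]
    have s1 : (φ c).symm (b 1) = c • b 1 := by
      rw [LinearEquiv.symm_apply_eq, map_smul, h1, smul_smul,
        mul_inv_cancel₀ hcne, one_smul]
    have s2 : (φ c).symm (b 2) = c • b 2 := by
      rw [LinearEquiv.symm_apply_eq, map_smul, h2, smul_smul,
        mul_inv_cancel₀ hcne, one_smul]
    apply b.ext
    intro i
    fin_cases i <;>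
      simp [h0, h1, h2, hδ0, hδ1, hδ2, wedge, s0, s1, s2, map_smul, map_sub,
        TensorProduct.map_tmul, TensorProduct.smul_tmul, TensorProduct.tmul_smul,
        smul_smul, smul_sub, inv_mul_cancel₀ hcne, mul_inv_cancel₀ hcne, mul_comm, mul_left_comm]
  -- part 2
  have part2 : ∀ X : L,
      WeakTendsto
        (fun c : ℝ =>
          TensorProduct.map (φ c).symm.toLinearMap (φ c).symm.toLinearMap (δ (φ c X)))
        atTop (δ X) := by
    intro X g
    have hev : (fun c : ℝ => g (TensorProduct.map (φ c).symm.toLinearMap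
        (φ c).symm.toLinearMap (δ (φ c X)))) =ᶠ[atTop] fun _ => g (δ X) := by
      filter_upwards [eventually_gt_atTop (0 : ℝ)] with c hc
      have := LinearMap.congr_fun (part1 c hc) X
      simp only [LinearMap.comp_apply, LinearEquiv.coe_coe] at this
      rw [this]
    exact Tendsto.congr' hev.symm tendsto_const_nhds
  -- part 3
  have part3 : ∀ X : L, TensorProduct.comm ℝ L L (δ X) = - δ X := by
    have h : (TensorProduct.comm ℝ L L).toLinearMap.comp δ = -δ := by
      apply b.ext
      intro i
      fin_cases i <;>
        simp [hδ0, hδ1, hδ2, wedge, map_sub, TensorProduct.comm_tmul, smul_sub] <;>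
        abel
    intro X
    have := LinearMap.congr_fun h X
    simpa using this
  -- part 4
  have part4 : ∀ X Y : L, δ (Bg X Y) = adT Bg X (δ Y) - adT Bg Y (δ X) := by
    let F : L →ₗ[ℝ] L →ₗ[ℝ] TensorProduct ℝ L L :=
      LinearMap.mk₂ ℝ (fun X Y => adT Bg X (δ Y) - adT Bg Y (δ X))
        (by intro X X' Y
            simp [adT, map_add, TensorProduct.map_add_left, TensorProduct.map_add_right,
              LinearMap.add_apply]
            abel)
        (by intro a X Y
            simp [adT, map_smul, TensorProduct.map_smul_left, TensorProduct.map_smul_right,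
              LinearMap.smul_apply, smul_sub]
            try abel)
        (by intro X Y Y'
            simp [adT, map_add, TensorProduct.map_add_left, TensorProduct.map_add_right,
              LinearMap.add_apply]
            abel)
        (by intro a X Y
            simp [adT, map_smul, TensorProduct.map_smul_left, TensorProduct.map_smul_right,
              LinearMap.smul_apply, smul_sub]
            try abel)
    have key : Bg.compr₂ δ = F := by
      apply b.ext
      intro i
      apply b.ext
      intro j
      show δ (Bg (b i) (b j)) = adT Bg (b i) (δ (b j)) - adT Bg (b j) (δ (b i))
      fin_cases i <;> fin_cases j <;>
        simp [adT, hδ0, hδ1, hδ2, wedge, hBg01, hBg10, hBg20, hBg21, hBg02, hBg12,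
          hdiag, map_sub, map_smul, TensorProduct.map_tmul, TensorProduct.sub_tmul,
          TensorProduct.tmul_sub, TensorProduct.tmul_smul, TensorProduct.smul_tmul,
          smul_sub, TensorProduct.tmul_neg, TensorProduct.neg_tmul] <;>
        abel
    intro X Y
    exact LinearMap.congr_fun (LinearMap.congr_fun key X) Y
  -- part 5 : CoJacobi
  have e0 : ∀ ξ η : Module.Dual ℝ L, dualBr δ ξ η (b 0) = 0 := by
    intro ξ η
    simp [dualBr, hδ0]
  have e1 : ∀ ξ η : Module.Dual ℝ L,
      dualBr δ ξ η (b 1) = ω * (ξ (b 1) * η (b 0) - ξ (b 0) * η (b 1)) := by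
    intro ξ η
    simp [dualBr, hδ1, wedge, map_sub, map_smul, TensorProduct.lift.tmul,
      LinearMap.compl₁₂_apply, LinearMap.mul_apply', smul_eq_mul]
    try ring
  have e2 : ∀ ξ η : Module.Dual ℝ L,
      dualBr δ ξ η (b 2) = ω * (ξ (b 2) * η (b 0) - ξ (b 0) * η (b 2)) := by
    intro ξ η
    simp [dualBr, hδ2, wedge, map_sub, map_smul, TensorProduct.lift.tmul,
      LinearMap.compl₁₂_apply, LinearMap.mul_apply', smul_eq_mul]
    try ring
  have part5 : CoJacobi δ := by
    constructor
    · intro ξ η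
      apply b.ext
      intro i
      fin_cases i <;>
        simp [e0, e1, e2, LinearMap.neg_apply] <;> ring
    · intro ξ η ζ
      apply b.ext
      intro i
      fin_cases i <;>
        simp [e0, e1, e2, LinearMap.add_apply] <;> ring
  exact ⟨part1, part2, part3, part4, part5⟩
end

section
/- Let 𝔤 be the centrally extended (1+1) Poincaré Lie algebra and α ∈ ℝ. The linear map δ_α : 𝔤 → 𝔤 ⊗ 𝔤 defined by δ_α(M) = α M∧P₁ + α P₀∧P₁, δ_α(P₀) = 0, δ_α(P₁) = 0, δ_α(K) = α K∧P₁ has skew-symmetric values, is a 1-cocycle, and satisfies the co-Jacobi condition; that is, (𝔤, δ_α) is a Lie bialgebra. -/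
/-- `adT br` bundled as a linear map in `X`. -/
noncomputable def adTlin {L : Type*} [AddCommGroup L] [Module ℝ L]
    (br : L →ₗ[ℝ] L →ₗ[ℝ] L) :
    L →ₗ[ℝ] (TensorProduct ℝ L L →ₗ[ℝ] TensorProduct ℝ L L) where
  toFun := adT br
  map_add' X Y := by
    simp only [adT, map_add, TensorProduct.map_add_left, TensorProduct.map_add_right]
    abel
  map_smul' c X := by
    simp only [adT, map_smul, TensorProduct.map_smul_left, TensorProduct.map_smul_right,
      RingHom.id_apply, smul_add]

/-- On the centrally extended (1+1) Poincaré Lie algebra (basis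
`M = b 0`, `P₀ = b 1`, `P₁ = b 2`, `K = b 3` with `[K,P₀]=P₁`, `[K,P₁]=M+P₀`,
`[P₀,P₁]=0`, `M` central), the map `δ_α` with `δ_α(M)=α M∧P₁+α P₀∧P₁`, `δ_α(P₀)=0`,
`δ_α(P₁)=0`, `δ_α(K)=α K∧P₁` has skew-symmetric values, is a 1-cocycle, and satisfies
the co-Jacobi condition; i.e. `(𝔤, δ_α)` is a Lie bialgebra. -/
theorem statement9
    {L : Type*} [AddCommGroup L] [Module ℝ L]
    (br : L →ₗ[ℝ] L →ₗ[ℝ] L)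
    (hanti : ∀ X Y : L, br X Y = - br Y X)
    (hjac : ∀ X Y Z : L, br (br X Y) Z + br (br Y Z) X + br (br Z X) Y = 0)
    (b : Module.Basis (Fin 4) ℝ L)
    (hbrM : ∀ X : L, br (b 0) X = 0)
    (hbr12 : br (b 1) (b 2) = 0)
    (hbr31 : br (b 3) (b 1) = b 2)
    (hbr32 : br (b 3) (b 2) = b 0 + b 1)
    (α : ℝ)
    (δ : L →ₗ[ℝ] TensorProduct ℝ L L)
    (hδ0 : δ (b 0) = α • wedge (b 0) (b 2) + α • wedge (b 1) (b 2))
    (hδ1 : δ (b 1) = 0)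
    (hδ2 : δ (b 2) = 0)
    (hδ3 : δ (b 3) = α • wedge (b 3) (b 2)) :
    (∀ X : L, TensorProduct.comm ℝ L L (δ X) = - δ X) ∧
    (∀ X Y : L, δ (br X Y) = adT br X (δ Y) - adT br Y (δ X)) ∧
    CoJacobi δ := by
  -- derived bracket values
  have hself : ∀ X : L, br X X = 0 := by
    intro X
    have h := hanti X X
    have h2 : (2 : ℝ) • br X X = 0 := by rw [two_smul]; nth_rw 1 [h]; abel
    simpa using (smul_eq_zero.mp h2).resolve_left (by norm_num)
  have hbrM' : ∀ X : L, br X (b 0) = 0 := fun X => by rw [hanti]; simp [hbrM]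
  have hbr21 : br (b 2) (b 1) = 0 := by rw [hanti, hbr12]; simp
  have hbr13 : br (b 1) (b 3) = -b 2 := by rw [hanti, hbr31]
  have hbr23 : br (b 2) (b 3) = -(b 0 + b 1) := by rw [hanti, hbr32]
  refine ⟨?_, ?_, ?_, ?_⟩
  · -- skew-symmetric values
    intro X
    have h : (TensorProduct.comm ℝ L L).toLinearMap.comp δ = -δ := by
      apply b.ext
      intro i
      fin_cases i <;>
        simp [hδ0, hδ1, hδ2, hδ3, wedge, TensorProduct.comm_tmul] <;> module
    simpa using LinearMap.congr_fun h X
  · -- cocycle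
    intro X Y
    have h : br.compr₂ δ = (adTlin br).compl₂ δ - ((adTlin br).compl₂ δ).flip := by
      apply b.ext; intro i
      apply b.ext; intro j
      fin_cases i <;> fin_cases j <;>
        simp [adTlin, adT, wedge, hδ0, hδ1, hδ2, hδ3, hself, hbrM, hbrM', hbr12, hbr21,
          hbr31, hbr13, hbr32, hbr23, TensorProduct.map_tmul, TensorProduct.tmul_add,
          TensorProduct.add_tmul, TensorProduct.tmul_neg, TensorProduct.neg_tmul,
          TensorProduct.tmul_sub, TensorProduct.sub_tmul, smul_add, smul_sub] <;> module
    have := LinearMap.congr_fun (LinearMap.congr_fun h X) Y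
    simpa [adTlin] using this
  · -- co-Jacobi skew
    intro ξ η
    apply b.ext; intro i
    fin_cases i <;>
      simp [dualBr, hδ0, hδ1, hδ2, hδ3, wedge] <;> ring
  · -- co-Jacobi Jacobi
    intro ξ η ζ
    apply b.ext; intro i
    fin_cases i <;>
      simp [dualBr, hδ0, hδ1, hδ2, hδ3, wedge] <;> ring
end

section
/- Let 𝔤' be the centrally extended (1+1) Galilei Lie algebra and α ∈ ℝ. The linear map δ'_α : 𝔤' → 𝔤' ⊗ 𝔤' defined by δ'_α(M) = α M∧P₁, δ'_α(P₀) = 0, δ'_α(P₁) = 0, δ'_α(K) = α K∧P₁ has skew-symmetric values, is a 1-cocycle, and satisfies the co-Jacobi condition; that is, (𝔤', δ'_α) is a Lie bialgebra. -/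
/-- On the centrally extended (1+1) Galilei Lie algebra (basis
`M = b 0`, `P₀ = b 1`, `P₁ = b 2`, `K = b 3` with `[K,P₀]=P₁`, `[K,P₁]=M`,
`[P₀,P₁]=0`, `M` central), the map `δ'_α` with `δ'_α(M)=α M∧P₁`, `δ'_α(P₀)=0`,
`δ'_α(P₁)=0`, `δ'_α(K)=α K∧P₁` has skew-symmetric values, is a 1-cocycle, and satisfies
the co-Jacobi condition; i.e. `(𝔤', δ'_α)` is a Lie bialgebra. -/
theorem statement10
    {L : Type*} [AddCommGroup L] [Module ℝ L]
    (br : L →ₗ[ℝ] L →ₗ[ℝ] L)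
    (hanti : ∀ X Y : L, br X Y = - br Y X)
    (hjac : ∀ X Y Z : L, br (br X Y) Z + br (br Y Z) X + br (br Z X) Y = 0)
    (b : Module.Basis (Fin 4) ℝ L)
    (hbrM : ∀ X : L, br (b 0) X = 0)
    (hbr12 : br (b 1) (b 2) = 0)
    (hbr31 : br (b 3) (b 1) = b 2)
    (hbr32 : br (b 3) (b 2) = b 0)
    (α : ℝ)
    (δ : L →ₗ[ℝ] TensorProduct ℝ L L)
    (hδ0 : δ (b 0) = α • wedge (b 0) (b 2))
    (hδ1 : δ (b 1) = 0)
    (hδ2 : δ (b 2) = 0)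
    (hδ3 : δ (b 3) = α • wedge (b 3) (b 2)) :
    (∀ X : L, TensorProduct.comm ℝ L L (δ X) = - δ X) ∧
    (∀ X Y : L, δ (br X Y) = adT br X (δ Y) - adT br Y (δ X)) ∧
    CoJacobi δ := by
  -- basic bracket facts
  have brXX : ∀ X : L, br X X = 0 := by
    intro X
    have h2 : (2:ℝ) • br X X = 0 := by
      rw [two_smul]; nth_rewrite 2 [hanti X X]; simp
    simpa using (smul_eq_zero.mp h2).resolve_left (by norm_num)
  have hbr10 : br (b 1) (b 0) = 0 := by rw [hanti]; simp [hbrM]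
  have hbr20 : br (b 2) (b 0) = 0 := by rw [hanti]; simp [hbrM]
  have hbr30 : br (b 3) (b 0) = 0 := by rw [hanti]; simp [hbrM]
  have hbr21 : br (b 2) (b 1) = 0 := by rw [hanti, hbr12]; simp
  have hbr13 : br (b 1) (b 3) = - b 2 := by rw [hanti, hbr31]
  have hbr23 : br (b 2) (b 3) = - b 0 := by rw [hanti, hbr32]
  -- wedge lemmas
  have wedge_self : ∀ X : L, wedge X X = 0 := fun X => by simp [wedge]
  have wedge_zl : ∀ X : L, wedge 0 X = 0 := fun X => by simp [wedge]
  have wedge_zr : ∀ X : L, wedge X 0 = 0 := fun X => by simp [wedge]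
  have wedge_nl : ∀ X Y : L, wedge (-X) Y = - wedge X Y := fun X Y => by
    simp only [wedge, TensorProduct.neg_tmul, TensorProduct.tmul_neg, neg_sub,
      sub_neg_eq_add]; abel
  have adT_wedge : ∀ X a c : L, adT br X (wedge a c)
      = wedge (br X a) c + wedge a (br X c) := by
    intro X a c
    simp [adT, wedge, TensorProduct.map_tmul]
    abel
  have adT_add : ∀ X Y : L, adT br (X + Y) = adT br X + adT br Y := by
    intro X Y
    simp only [adT, map_add, TensorProduct.map_add_left, TensorProduct.map_add_right]
    abel
  have adT_smul : ∀ (c : ℝ) (X : L), adT br (c • X) = c • adT br X := by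
    intro c X
    simp only [adT, map_smul, TensorProduct.map_smul_left, TensorProduct.map_smul_right,
      smul_add]
  -- Part 1: skew-symmetric values
  have skew : ∀ X : L, TensorProduct.comm ℝ L L (δ X) = - δ X := by
    have key : (TensorProduct.comm ℝ L L).toLinearMap.comp δ = - δ := by
      apply b.ext
      intro i
      fin_cases i <;>
        simp [hδ0, hδ1, hδ2, hδ3, wedge, TensorProduct.comm_tmul, smul_sub] <;>
        abel
    intro X
    simpa using LinearMap.congr_fun key X
  -- Part 2: cocycle
  have cocycle : ∀ X Y : L, δ (br X Y) = adT br X (δ Y) - adT br Y (δ X) := by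
    let C1 : L →ₗ[ℝ] L →ₗ[ℝ] TensorProduct ℝ L L :=
      LinearMap.mk₂ ℝ (fun X Y => δ (br X Y))
        (fun X X' Y => by simp) (fun c X Y => by simp)
        (fun X Y Y' => by simp) (fun c X Y => by simp)
    let C2 : L →ₗ[ℝ] L →ₗ[ℝ] TensorProduct ℝ L L :=
      LinearMap.mk₂ ℝ (fun X Y => adT br X (δ Y) - adT br Y (δ X))
        (fun X X' Y => by simp [adT_add]; abel)
        (fun c X Y => by simp [adT_smul, smul_sub])
        (fun X Y Y' => by simp [adT_add]; abel)
        (fun c X Y => by simp [adT_smul, smul_sub])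
    have hC : C1 = C2 := by
      apply b.ext; intro i
      apply b.ext; intro j
      fin_cases i <;> fin_cases j <;>
        simp [C1, C2, hbrM, hbr10, hbr20, hbr30, hbr12, hbr21, hbr13, hbr23,
          hbr31, hbr32, brXX, hδ0, hδ1, hδ2, hδ3, adT_wedge, wedge_self,
          wedge_zl, wedge_zr, wedge_nl, smul_sub]
    intro X Y
    have := LinearMap.congr_fun (LinearMap.congr_fun hC X) Y
    simpa [C1, C2] using this
  -- dualBr evaluations
  have d0 : ∀ ξ η : Module.Dual ℝ L, dualBr δ ξ η (b 0)
      = α * (ξ (b 0) * η (b 2) - ξ (b 2) * η (b 0)) := by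
    intro ξ η
    simp [dualBr, hδ0, wedge, smul_sub, mul_sub]
  have d1 : ∀ ξ η : Module.Dual ℝ L, dualBr δ ξ η (b 1) = 0 := by
    intro ξ η; simp [dualBr, hδ1]
  have d2 : ∀ ξ η : Module.Dual ℝ L, dualBr δ ξ η (b 2) = 0 := by
    intro ξ η; simp [dualBr, hδ2]
  have d3 : ∀ ξ η : Module.Dual ℝ L, dualBr δ ξ η (b 3)
      = α * (ξ (b 3) * η (b 2) - ξ (b 2) * η (b 3)) := by
    intro ξ η
    simp [dualBr, hδ3, wedge, smul_sub, mul_sub]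
  refine ⟨skew, cocycle, ?_, ?_⟩
  · intro ξ η
    apply b.ext; intro i
    fin_cases i <;> simp [d0, d1, d2, d3] <;> ring
  · intro ξ η ζ
    apply b.ext; intro i
    fin_cases i <;> simp [d0, d1, d2, d3] <;> ring
end

section
/- Let 𝔤 be the centrally extended (1+1) Poincaré Lie algebra, φ_c the linear automorphisms defined by φ_c(M)=c⁻²M, φ_c(P₀)=P₀, φ_c(P₁)=c⁻¹P₁, φ_c(K)=c⁻¹K, and fix α' ∈ ℝ. For c > 0, let δ_c be the cocommutator on 𝔤 with parameter α'/c, i.e. δ_c(M) = (α'/c)(M∧P₁ + P₀∧P₁), δ_c(P₀) = δ_c(P₁) = 0, δ_c(K) = (α'/c) K∧P₁. Then the limit lim_{c→+∞} (φ_c⁻¹ ⊗ φ_c⁻¹) ∘ δ_c ∘ φ_c exists and equals the map δ' given by δ'(M) = α' M∧P₁, δ'(P₀) = δ'(P₁) = 0, δ'(K) = α' K∧P₁, i.e., the centrally extended Galilei cocommutator with parameter α' (expressed in the same basis {M, P₀, P₁, K}). -/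
open Filter

set_option maxHeartbeats 1600000 in
/-- On the centrally extended (1+1) Poincaré Lie algebra (basis
`M = b 0`, `P₀ = b 1`, `P₁ = b 2`, `K = b 3`), with the contraction maps
`φ_c(M)=c⁻²M, φ_c(P₀)=P₀, φ_c(P₁)=c⁻¹P₁, φ_c(K)=c⁻¹K` and the cocommutators `δ_c`
with parameter `α'/c`, the limit `lim_{c→+∞} (φ_c⁻¹⊗φ_c⁻¹)∘δ_c∘φ_c` exists and equals
the centrally extended Galilei cocommutator `δ'` with parameter `α'`:
`δ'(M)=α' M∧P₁`, `δ'(P₀)=δ'(P₁)=0`, `δ'(K)=α' K∧P₁`. -/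
theorem statement11
    {L : Type*} [NormedAddCommGroup L] [NormedSpace ℝ L] [FiniteDimensional ℝ L]
    (br : L →ₗ[ℝ] L →ₗ[ℝ] L)
    (hanti : ∀ X Y : L, br X Y = - br Y X)
    (hjac : ∀ X Y Z : L, br (br X Y) Z + br (br Y Z) X + br (br Z X) Y = 0)
    (b : Module.Basis (Fin 4) ℝ L)
    (hbrM : ∀ X : L, br (b 0) X = 0)
    (hbr12 : br (b 1) (b 2) = 0)
    (hbr31 : br (b 3) (b 1) = b 2)
    (hbr32 : br (b 3) (b 2) = b 0 + b 1)
    (φ : ℝ → (L ≃ₗ[ℝ] L))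
    (hφ : ∀ c : ℝ, 0 < c →
      φ c (b 0) = (c ^ 2)⁻¹ • b 0 ∧ φ c (b 1) = b 1 ∧
      φ c (b 2) = c⁻¹ • b 2 ∧ φ c (b 3) = c⁻¹ • b 3)
    (α' : ℝ)
    (δc : ℝ → (L →ₗ[ℝ] TensorProduct ℝ L L))
    (hδc : ∀ c : ℝ, 0 < c →
      δc c (b 0) = (α' / c) • (wedge (b 0) (b 2) + wedge (b 1) (b 2)) ∧
      δc c (b 1) = 0 ∧ δc c (b 2) = 0 ∧
      δc c (b 3) = (α' / c) • wedge (b 3) (b 2)) :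
    ∃ δ' : L →ₗ[ℝ] TensorProduct ℝ L L,
      (∀ X : L,
        WeakTendsto
          (fun c : ℝ =>
            TensorProduct.map (φ c).symm.toLinearMap (φ c).symm.toLinearMap
              (δc c (φ c X)))
          atTop (δ' X)) ∧
      δ' (b 0) = α' • wedge (b 0) (b 2) ∧
      δ' (b 1) = 0 ∧ δ' (b 2) = 0 ∧
      δ' (b 3) = α' • wedge (b 3) (b 2) := by
  classical
  set δ' := Module.Basis.constr b ℝ ![α' • wedge (b 0) (b 2), 0, 0, α' • wedge (b 3) (b 2)] with hδ'
  have hδ0 : δ' (b 0) = α' • wedge (b 0) (b 2) := by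
    simp [hδ', Module.Basis.constr_basis]
  have hδ1 : δ' (b 1) = 0 := by simp [hδ', Module.Basis.constr_basis]
  have hδ2 : δ' (b 2) = 0 := by simp [hδ', Module.Basis.constr_basis]
  have hδ3 : δ' (b 3) = α' • wedge (b 3) (b 2) := by
    simp [hδ', Module.Basis.constr_basis]
  refine ⟨δ', ?_, hδ0, hδ1, hδ2, hδ3⟩
  intro X g
  set x : Fin 4 → ℝ := fun i => b.repr X i with hx
  have hX : X = x 0 • b 0 + x 1 • b 1 + x 2 • b 2 + x 3 • b 3 := by
    have h := b.sum_repr X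
    rw [Fin.sum_univ_four] at h
    exact h.symm
  have hδ'X : δ' X = (α' * x 0) • wedge (b 0) (b 2) + (α' * x 3) • wedge (b 3) (b 2) := by
    conv_lhs => rw [hX]
    simp only [map_add, map_smul, hδ0, hδ1, hδ2, hδ3, smul_zero, add_zero, zero_add,
      smul_smul]
    ring_nf
  have hev : (fun c : ℝ => g (TensorProduct.map (φ c).symm.toLinearMap
        (φ c).symm.toLinearMap (δc c (φ c X)))) =ᶠ[atTop]
      fun c : ℝ => g (δ' X) + (α' * x 0) * (c ^ 2)⁻¹ * g (wedge (b 1) (b 2)) := by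
    filter_upwards [eventually_ge_atTop (1 : ℝ)] with c hc
    have hc0 : (0 : ℝ) < c := lt_of_lt_of_le one_pos hc
    have hcne : (c : ℝ) ≠ 0 := ne_of_gt hc0
    have hc2 : (c ^ 2 : ℝ) ≠ 0 := pow_ne_zero _ hcne
    obtain ⟨h0, h1, h2, h3⟩ := hφ c hc0
    obtain ⟨d0, d1, d2, d3⟩ := hδc c hc0
    have s0 : (φ c).symm (b 0) = (c ^ 2) • b 0 := by
      rw [LinearEquiv.symm_apply_eq, map_smul, h0, smul_smul, mul_inv_cancel₀ hc2, one_smul]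
    have s1 : (φ c).symm (b 1) = b 1 := by
      rw [LinearEquiv.symm_apply_eq, h1]
    have s2 : (φ c).symm (b 2) = c • b 2 := by
      rw [LinearEquiv.symm_apply_eq, map_smul, h2, smul_smul, mul_inv_cancel₀ hcne, one_smul]
    have s3 : (φ c).symm (b 3) = c • b 3 := by
      rw [LinearEquiv.symm_apply_eq, map_smul, h3, smul_smul, mul_inv_cancel₀ hcne, one_smul]
    have lhs : TensorProduct.map (φ c).symm.toLinearMap (φ c).symm.toLinearMap
        (δc c (φ c X))
        = δ' X + (α' * x 0 * (c ^ 2)⁻¹) • wedge (b 1) (b 2) := by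
      rw [hδ'X]
      conv_lhs => rw [hX]
      simp only [map_add, map_smul, h0, h1, h2, h3, d0, d1, d2, d3, smul_add, smul_zero,
        add_zero, zero_add, wedge, map_sub, smul_sub, TensorProduct.map_tmul,
        LinearEquiv.coe_coe, s0, s1, s2, s3, TensorProduct.tmul_smul,
        ← TensorProduct.smul_tmul', smul_smul]
      match_scalars <;> field_simp <;> ring
    rw [lhs, map_add, map_smul, smul_eq_mul]
  refine Tendsto.congr' hev.symm ?_
  have hinv : Tendsto (fun c : ℝ => (c ^ 2)⁻¹) atTop (nhds 0) :=
    (tendsto_pow_atTop two_ne_zero).inv_tendsto_atTop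
  have htend : Tendsto
      (fun c : ℝ => g (δ' X) + (α' * x 0) * (c ^ 2)⁻¹ * g (wedge (b 1) (b 2)))
      atTop (nhds (g (δ' X) + (α' * x 0) * 0 * g (wedge (b 1) (b 2)))) :=
    Tendsto.add tendsto_const_nhds ((hinv.const_mul _).mul_const _)
  simpa using htend
end

section
/- Let 𝔤 be the centrally extended (1+1) Poincaré Lie algebra and φ_c the linear automorphisms defined by φ_c(M)=c⁻²M, φ_c(P₀)=P₀, φ_c(P₁)=c⁻¹P₁, φ_c(K)=c⁻¹K. Fix real numbers α' ≠ 0 and β₂', β₅', β₆', β₇', β₈'. For c > 0 define δ_c : 𝔤 → 𝔤 ⊗ 𝔤 by δ_c(M) = α(M∧P₁ + P₀∧P₁), δ_c(P₀) = β₂(M∧P₁ + P₀∧P₁), δ_c(P₁) = β₅(M∧P₁ + P₀∧P₁), δ_c(K) = β₆ M∧P₀ + β₇ M∧P₁ + β₈ P₀∧P₁ + β₅(M∧K + P₀∧K) − (α+β₂) P₁∧K, where α = α'/c, β₂ = β₂'/c³, β₅ = β₅'/c², β₆ = β₆'/c, β₇ = β₇'/c², β₈ = β₈'. Then the limit L :=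 lim_{c→+∞} (φ_c⁻¹ ⊗ φ_c⁻¹) ∘ δ_c ∘ φ_c exists and is given by L(M) = α' M∧P₁, L(P₀) = β₂' M∧P₁, L(P₁) = β₅' M∧P₁, L(K) = β₆' M∧P₀ + β₇' M∧P₁ + β₈' P₀∧P₁ + β₅' M∧K − α' P₁∧K. Moreover, L coincides with the centrally extended Galilei cocommutator with parameter α' (namely L(M) = α' M∧P₁, L(P₀) = L(P₁) = 0, L(K) = α' K∧P₁, where K∧P₁ = −P₁∧K) if and only if β₂' = β₅' = β₆' = β₇' = β₈' = 0, in which case δ_c(M) = (α'/c)(M∧P₁ + P₀∧P₁), δ_c(P₀) = δ_c(P₁) = 0, δ_c(K) = (α'/c) K∧P₁ for every c; hence this is the unique Lie bialgebra structure on 𝔤 whose fundamental Lie bialgebra contraction gives the centrally extended Galilei cocommutator. -/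
open Filter

lemma map_wedge {L : Type*} [AddCommGroup L] [Module ℝ L] (f : L →ₗ[ℝ] L) (X Y : L) :
    TensorProduct.map f f (wedge X Y) = wedge (f X) (f Y) := by simp [wedge]

lemma wedge_smul_left {L : Type*} [AddCommGroup L] [Module ℝ L] (a : ℝ) (X Y : L) :
    wedge (a • X) Y = a • wedge X Y := by
  simp [wedge, TensorProduct.smul_tmul', TensorProduct.tmul_smul, smul_sub]

lemma wedge_smul_right {L : Type*} [AddCommGroup L] [Module ℝ L] (a : ℝ) (X Y : L) :
    wedge X (a • Y) = a • wedge X Y := by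
  simp [wedge, TensorProduct.smul_tmul', TensorProduct.tmul_smul, smul_sub]

lemma wedge_comm {L : Type*} [AddCommGroup L] [Module ℝ L] (X Y : L) :
    wedge X Y = - wedge Y X := by simp [wedge]

lemma aux_weakTendsto {V : Type*} [AddCommGroup V] [Module ℝ V] (f : ℝ → V) (A B : V)
    (h : ∀ᶠ c : ℝ in atTop, f c = A + (c ^ 2)⁻¹ • B) : WeakTendsto f atTop A := by
  intro g
  have h2 : Tendsto (fun c : ℝ => (c ^ 2)⁻¹ * g B) atTop (nhds 0) := by
    have hp : Tendsto (fun c : ℝ => ((c ^ 2)⁻¹ : ℝ)) atTop (nhds 0) :=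
      (tendsto_pow_atTop two_ne_zero).inv_tendsto_atTop
    simpa using hp.mul_const (g B)
  have h3 : Tendsto (fun c : ℝ => g A + (c ^ 2)⁻¹ * g B) atTop (nhds (g A)) := by
    have := (tendsto_const_nhds : Tendsto (fun _ : ℝ => g A) atTop (nhds (g A))).add h2
    simpa using this
  refine Tendsto.congr' ?_ h3
  filter_upwards [h] with c hc
  rw [hc]
  simp

set_option maxHeartbeats 2000000 in
/-- Fundamental multiparametric Lie bialgebra contraction of the
9-parameter family of cocommutators on the centrally extended (1+1) Poincaré Lie
algebra (basis `M = b 0`, `P₀ = b 1`, `P₁ = b 2`, `K = b 3`), with contraction maps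
`φ_c(M)=c⁻²M, φ_c(P₀)=P₀, φ_c(P₁)=c⁻¹P₁, φ_c(K)=c⁻¹K` and rescaled parameters
`α = α'/c, β₂ = β₂'/c³, β₅ = β₅'/c², β₆ = β₆'/c, β₇ = β₇'/c², β₈ = β₈'`.  The limit
`L := lim_{c→+∞} (φ_c⁻¹⊗φ_c⁻¹)∘δ_c∘φ_c` exists, has the stated values on the basis,
and coincides with the centrally extended Galilei cocommutator with parameter `α'` if
and only if `β₂' = β₅' = β₆' = β₇' = β₈' = 0`, in which case `δ_c` is the cocommutator
with parameter `α'/c` for every `c > 0`. -/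
theorem statement12
    {L : Type*} [NormedAddCommGroup L] [NormedSpace ℝ L] [FiniteDimensional ℝ L]
    (br : L →ₗ[ℝ] L →ₗ[ℝ] L)
    (hanti : ∀ X Y : L, br X Y = - br Y X)
    (hjac : ∀ X Y Z : L, br (br X Y) Z + br (br Y Z) X + br (br Z X) Y = 0)
    (b : Module.Basis (Fin 4) ℝ L)
    (hbrM : ∀ X : L, br (b 0) X = 0)
    (hbr12 : br (b 1) (b 2) = 0)
    (hbr31 : br (b 3) (b 1) = b 2)
    (hbr32 : br (b 3) (b 2) = b 0 + b 1)
    (φ : ℝ → (L ≃ₗ[ℝ] L))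
    (hφ : ∀ c : ℝ, 0 < c →
      φ c (b 0) = (c ^ 2)⁻¹ • b 0 ∧ φ c (b 1) = b 1 ∧
      φ c (b 2) = c⁻¹ • b 2 ∧ φ c (b 3) = c⁻¹ • b 3)
    (α' β₂' β₅' β₆' β₇' β₈' : ℝ) (hα' : α' ≠ 0)
    (δc : ℝ → (L →ₗ[ℝ] TensorProduct ℝ L L))
    (hδc : ∀ c : ℝ, 0 < c →
      δc c (b 0) = (α' / c) • (wedge (b 0) (b 2) + wedge (b 1) (b 2)) ∧
      δc c (b 1) = (β₂' / c ^ 3) • (wedge (b 0) (b 2) + wedge (b 1) (b 2)) ∧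
      δc c (b 2) = (β₅' / c ^ 2) • (wedge (b 0) (b 2) + wedge (b 1) (b 2)) ∧
      δc c (b 3) = (β₆' / c) • wedge (b 0) (b 1) + (β₇' / c ^ 2) • wedge (b 0) (b 2)
        + β₈' • wedge (b 1) (b 2)
        + (β₅' / c ^ 2) • (wedge (b 0) (b 3) + wedge (b 1) (b 3))
        - (α' / c + β₂' / c ^ 3) • wedge (b 2) (b 3)) :
    ∃ Lm : L →ₗ[ℝ] TensorProduct ℝ L L,
      (∀ X : L,
        WeakTendsto
          (fun c : ℝ =>
            TensorProduct.map (φ c).symm.toLinearMap (φ c).symm.toLinearMap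
              (δc c (φ c X)))
          atTop (Lm X)) ∧
      Lm (b 0) = α' • wedge (b 0) (b 2) ∧
      Lm (b 1) = β₂' • wedge (b 0) (b 2) ∧
      Lm (b 2) = β₅' • wedge (b 0) (b 2) ∧
      Lm (b 3) = β₆' • wedge (b 0) (b 1) + β₇' • wedge (b 0) (b 2)
        + β₈' • wedge (b 1) (b 2) + β₅' • wedge (b 0) (b 3)
        - α' • wedge (b 2) (b 3) ∧
      ((Lm (b 0) = α' • wedge (b 0) (b 2) ∧ Lm (b 1) = 0 ∧ Lm (b 2) = 0 ∧
          Lm (b 3) = α' • wedge (b 3) (b 2)) ↔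
        (β₂' = 0 ∧ β₅' = 0 ∧ β₆' = 0 ∧ β₇' = 0 ∧ β₈' = 0)) ∧
      ((β₂' = 0 ∧ β₅' = 0 ∧ β₆' = 0 ∧ β₇' = 0 ∧ β₈' = 0) →
        ∀ c : ℝ, 0 < c →
          δc c (b 0) = (α' / c) • (wedge (b 0) (b 2) + wedge (b 1) (b 2)) ∧
          δc c (b 1) = 0 ∧ δc c (b 2) = 0 ∧
          δc c (b 3) = (α' / c) • wedge (b 3) (b 2)) := by
  classical
  obtain ⟨vals, hvals⟩ : ∃ v : Fin 4 → TensorProduct ℝ L L, v =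
      ![α' • wedge (b 0) (b 2), β₂' • wedge (b 0) (b 2), β₅' • wedge (b 0) (b 2),
        β₆' • wedge (b 0) (b 1) + β₇' • wedge (b 0) (b 2) + β₈' • wedge (b 1) (b 2)
          + β₅' • wedge (b 0) (b 3) - α' • wedge (b 2) (b 3)] := ⟨_, rfl⟩
  obtain ⟨extra, hextra⟩ : ∃ v : Fin 4 → TensorProduct ℝ L L, v =
      ![α' • wedge (b 1) (b 2), β₂' • wedge (b 1) (b 2), β₅' • wedge (b 1) (b 2),
        β₅' • wedge (b 1) (b 3) - β₂' • wedge (b 2) (b 3)] := ⟨_, rfl⟩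
  obtain ⟨Lm, hLmdef⟩ : ∃ Lm : L →ₗ[ℝ] TensorProduct ℝ L L, Lm = b.constr ℝ vals :=
    ⟨_, rfl⟩
  have hLm : ∀ i, Lm (b i) = vals i := fun i => by rw [hLmdef]; exact b.constr_basis ℝ vals i
  have hs : ∀ c : ℝ, 0 < c →
      (φ c).symm (b 0) = (c ^ 2) • b 0 ∧ (φ c).symm (b 1) = b 1 ∧
      (φ c).symm (b 2) = c • b 2 ∧ (φ c).symm (b 3) = c • b 3 := by
    intro c hc
    obtain ⟨h0, h1, h2, h3⟩ := hφ c hc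
    have hc0 : c ≠ 0 := hc.ne'
    refine ⟨?_, ?_, ?_, ?_⟩
    · rw [LinearEquiv.symm_apply_eq, map_smul, h0, smul_smul,
        mul_inv_cancel₀ (by positivity), one_smul]
    · rw [LinearEquiv.symm_apply_eq, h1]
    · rw [LinearEquiv.symm_apply_eq, map_smul, h2, smul_smul, mul_inv_cancel₀ hc0, one_smul]
    · rw [LinearEquiv.symm_apply_eq, map_smul, h3, smul_smul, mul_inv_cancel₀ hc0, one_smul]
  have hb0 : WeakTendsto (fun c : ℝ =>
      TensorProduct.map (φ c).symm.toLinearMap (φ c).symm.toLinearMap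
        (δc c (φ c (b 0)))) atTop (vals 0) := by
    apply aux_weakTendsto _ _ (extra 0)
    filter_upwards [eventually_gt_atTop (0 : ℝ)] with c hc
    obtain ⟨h0, h1, h2, h3⟩ := hφ c hc
    obtain ⟨d0, d1, d2, d3⟩ := hδc c hc
    obtain ⟨s0, s1, s2, s3⟩ := hs c hc
    have hc0 : c ≠ 0 := hc.ne'
    rw [h0, map_smul, d0]
    simp only [map_smul, map_add, map_sub, map_wedge, LinearEquiv.coe_coe,
      s0, s1, s2, s3, wedge_smul_left, wedge_smul_right, hvals, hextra,
      Matrix.cons_val_zero]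
    match_scalars <;> (field_simp; try ring)
  have hb1 : WeakTendsto (fun c : ℝ =>
      TensorProduct.map (φ c).symm.toLinearMap (φ c).symm.toLinearMap
        (δc c (φ c (b 1)))) atTop (vals 1) := by
    apply aux_weakTendsto _ _ (extra 1)
    filter_upwards [eventually_gt_atTop (0 : ℝ)] with c hc
    obtain ⟨h0, h1, h2, h3⟩ := hφ c hc
    obtain ⟨d0, d1, d2, d3⟩ := hδc c hc
    obtain ⟨s0, s1, s2, s3⟩ := hs c hc
    have hc0 : c ≠ 0 := hc.ne'
    rw [h1, d1]
    simp only [map_smul, map_add, map_sub, map_wedge, LinearEquiv.coe_coe,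
      s0, s1, s2, s3, wedge_smul_left, wedge_smul_right, hvals, hextra,
      Matrix.cons_val_one, Matrix.head_cons, Matrix.cons_val_zero]
    match_scalars <;> (field_simp; try ring)
  have hb2 : WeakTendsto (fun c : ℝ =>
      TensorProduct.map (φ c).symm.toLinearMap (φ c).symm.toLinearMap
        (δc c (φ c (b 2)))) atTop (vals 2) := by
    apply aux_weakTendsto _ _ (extra 2)
    filter_upwards [eventually_gt_atTop (0 : ℝ)] with c hc
    obtain ⟨h0, h1, h2, h3⟩ := hφ c hc
    obtain ⟨d0, d1, d2, d3⟩ := hδc c hc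
    obtain ⟨s0, s1, s2, s3⟩ := hs c hc
    have hc0 : c ≠ 0 := hc.ne'
    rw [h2, map_smul, d2]
    simp only [map_smul, map_add, map_sub, map_wedge, LinearEquiv.coe_coe,
      s0, s1, s2, s3, wedge_smul_left, wedge_smul_right, hvals, hextra,
      Matrix.cons_val_two, Matrix.tail_cons, Matrix.head_cons]
    match_scalars <;> (field_simp; try ring)
  have hb3 : WeakTendsto (fun c : ℝ =>
      TensorProduct.map (φ c).symm.toLinearMap (φ c).symm.toLinearMap
        (δc c (φ c (b 3)))) atTop (vals 3) := by
    apply aux_weakTendsto _ _ (extra 3)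
    filter_upwards [eventually_gt_atTop (0 : ℝ)] with c hc
    obtain ⟨h0, h1, h2, h3⟩ := hφ c hc
    obtain ⟨d0, d1, d2, d3⟩ := hδc c hc
    obtain ⟨s0, s1, s2, s3⟩ := hs c hc
    have hc0 : c ≠ 0 := hc.ne'
    rw [h3, map_smul, d3]
    simp only [map_smul, map_add, map_sub, map_wedge, LinearEquiv.coe_coe,
      s0, s1, s2, s3, wedge_smul_left, wedge_smul_right, hvals, hextra,
      Matrix.cons_val_three, Matrix.tail_cons, Matrix.head_cons]
    match_scalars <;> (field_simp; try ring)
  have hbase : ∀ i : Fin 4,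
      WeakTendsto
        (fun c : ℝ =>
          TensorProduct.map (φ c).symm.toLinearMap (φ c).symm.toLinearMap
            (δc c (φ c (b i)))) atTop (vals i) := by
    intro i
    fin_cases i
    exacts [hb0, hb1, hb2, hb3]
  refine ⟨Lm, ?_, ?_, ?_, ?_, ?_, ?_, ?_⟩
  · -- the limit for general X
    intro X g
    have hFx : ∀ c : ℝ,
        TensorProduct.map (φ c).symm.toLinearMap (φ c).symm.toLinearMap (δc c (φ c X))
          = ∑ i, b.repr X i •
              TensorProduct.map (φ c).symm.toLinearMap (φ c).symm.toLinearMap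
                (δc c (φ c (b i))) := by
      intro c
      conv_lhs => rw [← b.sum_repr X]
      simp only [map_sum, map_smul]
    have hLmX : Lm X = ∑ i, b.repr X i • vals i := by
      conv_lhs => rw [← b.sum_repr X]
      simp only [map_sum, map_smul, hLm]
    have hsum := tendsto_finset_sum (Finset.univ : Finset (Fin 4))
      (fun i _ => ((hbase i g).const_mul (b.repr X i)))
    have e1 : (fun c : ℝ => g (TensorProduct.map (φ c).symm.toLinearMap
        (φ c).symm.toLinearMap (δc c (φ c X))))
        = fun c => ∑ i, b.repr X i * g (TensorProduct.map (φ c).symm.toLinearMap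
            (φ c).symm.toLinearMap (δc c (φ c (b i)))) := by
      funext c
      rw [hFx c]
      simp [smul_eq_mul]
    have e2 : g (Lm X) = ∑ i, b.repr X i * g (vals i) := by
      rw [hLmX]; simp [smul_eq_mul]
    rw [e1, e2]
    exact hsum
  · rw [hLm 0, hvals]; rfl
  · rw [hLm 1, hvals]; rfl
  · rw [hLm 2, hvals]; rfl
  · rw [hLm 3, hvals]; rfl
  · constructor
    · rintro ⟨-, e1, e2, e3⟩
      rw [hLm 1, hvals] at e1
      rw [hLm 2, hvals] at e2
      rw [hLm 3, hvals] at e3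
      simp only [Matrix.cons_val_one, Matrix.head_cons, Matrix.cons_val_two,
        Matrix.tail_cons, Matrix.cons_val_three] at e1 e2 e3
      have hβ₂ : β₂' = 0 := by
        have := congrArg (fun t => (Module.Basis.tensorProduct b b).repr t (0, 2)) e1
        simpa [wedge, Module.Basis.tensorProduct_repr_tmul_apply, Finsupp.single_apply] using this
      have hβ₅ : β₅' = 0 := by
        have := congrArg (fun t => (Module.Basis.tensorProduct b b).repr t (0, 2)) e2
        simpa [wedge, Module.Basis.tensorProduct_repr_tmul_apply, Finsupp.single_apply] using this
      have hβ₆ : β₆' = 0 := by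
        have := congrArg (fun t => (Module.Basis.tensorProduct b b).repr t (0, 1)) e3
        simpa [wedge, Module.Basis.tensorProduct_repr_tmul_apply, Finsupp.single_apply] using this
      have hβ₇ : β₇' = 0 := by
        have := congrArg (fun t => (Module.Basis.tensorProduct b b).repr t (0, 2)) e3
        simpa [wedge, Module.Basis.tensorProduct_repr_tmul_apply, Finsupp.single_apply] using this
      have hβ₈ : β₈' = 0 := by
        have := congrArg (fun t => (Module.Basis.tensorProduct b b).repr t ((1 : Fin 4), 2)) e3
        simpa [wedge, Module.Basis.tensorProduct_repr_tmul_apply, Finsupp.single_apply] using this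
      exact ⟨hβ₂, hβ₅, hβ₆, hβ₇, hβ₈⟩
    · rintro ⟨hβ₂, hβ₅, hβ₆, hβ₇, hβ₈⟩
      subst hβ₂ hβ₅ hβ₆ hβ₇ hβ₈
      refine ⟨by rw [hLm 0, hvals]; rfl, by rw [hLm 1, hvals]; simp,
        by rw [hLm 2, hvals]; simp, ?_⟩
      rw [hLm 3, hvals, wedge_comm (b 3) (b 2)]
      simp
  · rintro ⟨hβ₂, hβ₅, hβ₆, hβ₇, hβ₈⟩ c hc
    subst hβ₂ hβ₅ hβ₆ hβ₇ hβ₈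
    obtain ⟨d0, d1, d2, d3⟩ := hδc c hc
    refine ⟨d0, by simpa using d1, by simpa using d2, ?_⟩
    rw [d3, wedge_comm (b 3) (b 2)]
    simp
end

section
/- Let 𝔤' be the centrally extended (1+1) Galilei Lie algebra, α ∈ ℝ with α ≠ 0, and let δ'_α be the cocommutator δ'_α(M) = α M∧P₁, δ'_α(P₀) = δ'_α(P₁) = 0, δ'_α(K) = α K∧P₁. Then there is no element r ∈ 𝔤' ⊗ 𝔤' such that δ'_α(X) = X·r for all X ∈ 𝔤'; that is, the Lie bialgebra (𝔤', δ'_α) is non-coboundary. -/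
/-- On the centrally extended (1+1) Galilei Lie algebra (basis
`M = b 0`, `P₀ = b 1`, `P₁ = b 2`, `K = b 3` with `[K,P₀]=P₁`, `[K,P₁]=M`, `[P₀,P₁]=0`,
`M` central), the cocommutator `δ'_α` with `α ≠ 0` (`δ'_α(M)=α M∧P₁`,
`δ'_α(P₀)=δ'_α(P₁)=0`, `δ'_α(K)=α K∧P₁`) is non-coboundary: there is no `r ∈ 𝔤'⊗𝔤'`
with `δ'_α(X) = X · r` for all `X`. -/
theorem statement14
    {L : Type*} [AddCommGroup L] [Module ℝ L]
    (br : L →ₗ[ℝ] L →ₗ[ℝ] L)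
    (hanti : ∀ X Y : L, br X Y = - br Y X)
    (hjac : ∀ X Y Z : L, br (br X Y) Z + br (br Y Z) X + br (br Z X) Y = 0)
    (b : Module.Basis (Fin 4) ℝ L)
    (hbrM : ∀ X : L, br (b 0) X = 0)
    (hbr12 : br (b 1) (b 2) = 0)
    (hbr31 : br (b 3) (b 1) = b 2)
    (hbr32 : br (b 3) (b 2) = b 0)
    (α : ℝ) (hα : α ≠ 0)
    (δ : L →ₗ[ℝ] TensorProduct ℝ L L)
    (hδ0 : δ (b 0) = α • wedge (b 0) (b 2))
    (hδ1 : δ (b 1) = 0)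
    (hδ2 : δ (b 2) = 0)
    (hδ3 : δ (b 3) = α • wedge (b 3) (b 2)) :
    ¬ ∃ r : TensorProduct ℝ L L, ∀ X : L, δ X = adT br X r := by
  rintro ⟨r, hr⟩
  have hbr0 : br (b 0) = 0 := LinearMap.ext hbrM
  have h0 : adT br (b 0) r = 0 := by
    simp [adT, hbr0, TensorProduct.map_zero_left]
  have h : α • wedge (b 0) (b 2) = 0 := by rw [← hδ0, hr, h0]
  have h2 := congrArg (fun t => ((b.tensorProduct b).repr t) (0, 2)) h
  simp [wedge, Module.Basis.tensorProduct_repr_tmul_apply, Finsupp.single_apply] at h2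
  exact hα h2
end

section
/- Let 𝔤 be the centrally extended (1+1) Poincaré Lie algebra, α ∈ ℝ with α ≠ 0, and let δ_α be the cocommutator δ_α(M) = α M∧P₁ + α P₀∧P₁, δ_α(P₀) = δ_α(P₁) = 0, δ_α(K) = α K∧P₁. Then there is no element r ∈ 𝔤 ⊗ 𝔤 such that δ_α(X) = X·r for all X ∈ 𝔤; that is, the Lie bialgebra (𝔤, δ_α) is non-coboundary. -/
/-- On the centrally extended (1+1) Poincaré Lie algebra (basis
`M = b 0`, `P₀ = b 1`, `P₁ = b 2`, `K = b 3` with `[K,P₀]=P₁`, `[K,P₁]=M+P₀`,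
`[P₀,P₁]=0`, `M` central), the cocommutator `δ_α` with `α ≠ 0`
(`δ_α(M)=α M∧P₁+α P₀∧P₁`, `δ_α(P₀)=δ_α(P₁)=0`, `δ_α(K)=α K∧P₁`) is non-coboundary:
there is no `r ∈ 𝔤⊗𝔤` with `δ_α(X) = X · r` for all `X`. -/
theorem statement15
    {L : Type*} [AddCommGroup L] [Module ℝ L]
    (br : L →ₗ[ℝ] L →ₗ[ℝ] L)
    (hanti : ∀ X Y : L, br X Y = - br Y X)
    (hjac : ∀ X Y Z : L, br (br X Y) Z + br (br Y Z) X + br (br Z X) Y = 0)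
    (b : Module.Basis (Fin 4) ℝ L)
    (hbrM : ∀ X : L, br (b 0) X = 0)
    (hbr12 : br (b 1) (b 2) = 0)
    (hbr31 : br (b 3) (b 1) = b 2)
    (hbr32 : br (b 3) (b 2) = b 0 + b 1)
    (α : ℝ) (hα : α ≠ 0)
    (δ : L →ₗ[ℝ] TensorProduct ℝ L L)
    (hδ0 : δ (b 0) = α • wedge (b 0) (b 2) + α • wedge (b 1) (b 2))
    (hδ1 : δ (b 1) = 0)
    (hδ2 : δ (b 2) = 0)
    (hδ3 : δ (b 3) = α • wedge (b 3) (b 2)) :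
    ¬ ∃ r : TensorProduct ℝ L L, ∀ X : L, δ X = adT br X r := by
  rintro ⟨r, hr⟩
  have hbr0 : br (b 0) = 0 := by ext X; simp [hbrM]
  have had : adT br (b 0) r = 0 := by
    have : adT br (b 0) = 0 := by
      unfold adT
      rw [hbr0]
      ext x y
      simp
    rw [this]; rfl
  have h0 : α • wedge (b 0) (b 2) + α • wedge (b 1) (b 2) = 0 := by
    rw [← hδ0, hr, had]
  have := congrArg (fun t => (Module.Basis.tensorProduct b b).repr t ((0 : Fin 4), (2 : Fin 4))) h0
  simp [wedge, Module.Basis.tensorProduct_repr_tmul_apply, Finsupp.single_apply] at this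
  exact hα this
end

section
/- The centrally extended (1+1) Galilei Lie algebra 𝔤' is NOT isomorphic as a real Lie algebra to the direct sum 𝔤₀ ⊕ ℝ of the (1+1) Galilei Lie algebra 𝔤₀ with a 1-dimensional abelian Lie algebra: there exists no Lie algebra isomorphism between 𝔤' and 𝔤₀ × ℝ. -/
/-- The centrally extended (1+1) Galilei Lie algebra (basis
`M = bL 0`, `P₀ = bL 1`, `P₁ = bL 2`, `K = bL 3` with `[K,P₀]=P₁`, `[K,P₁]=M`,
`[P₀,P₁]=0`, `M` central) is NOT isomorphic to the direct sum of the (1+1) Galilei Lie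
algebra (basis `P₀ = bG 0`, `P₁ = bG 1`, `K = bG 2` with `[P₀,P₁]=0`, `[K,P₀]=P₁`,
`[K,P₁]=0`) with a 1-dimensional abelian Lie algebra: no linear equivalence
`𝔤' ≃ 𝔤₀ × ℝ` intertwines the bracket of `𝔤'` with the product bracket
`⁅(x,a),(y,b)⁆ = (⁅x,y⁆, 0)` on `𝔤₀ × ℝ`. -/
theorem statement17
    {L : Type*} [AddCommGroup L] [Module ℝ L]
    (brL : L →ₗ[ℝ] L →ₗ[ℝ] L)
    (hLanti : ∀ X Y : L, brL X Y = - brL Y X)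
    (hLjac : ∀ X Y Z : L, brL (brL X Y) Z + brL (brL Y Z) X + brL (brL Z X) Y = 0)
    (bL : Module.Basis (Fin 4) ℝ L)
    (hbrM : ∀ X : L, brL (bL 0) X = 0)
    (hbr12 : brL (bL 1) (bL 2) = 0)
    (hbr31 : brL (bL 3) (bL 1) = bL 2)
    (hbr32 : brL (bL 3) (bL 2) = bL 0)
    {G : Type*} [AddCommGroup G] [Module ℝ G]
    (brG : G →ₗ[ℝ] G →ₗ[ℝ] G)
    (hGanti : ∀ X Y : G, brG X Y = - brG Y X)
    (hGjac : ∀ X Y Z : G, brG (brG X Y) Z + brG (brG Y Z) X + brG (brG Z X) Y = 0)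
    (bG : Module.Basis (Fin 3) ℝ G)
    (hbG01 : brG (bG 0) (bG 1) = 0)
    (hbG20 : brG (bG 2) (bG 0) = bG 1)
    (hbG21 : brG (bG 2) (bG 1) = 0) :
    ¬ ∃ f : L ≃ₗ[ℝ] G × ℝ,
        ∀ X Y : L, f (brL X Y) = (brG (f X).1 (f Y).1, 0) := by
  rintro ⟨f, hf⟩
  -- brackets of equal arguments vanish
  have hGsq : ∀ x : G, brG x x = 0 := by
    intro x
    have h := hGanti x x
    have h2 : (2 : ℝ) • brG x x = 0 := by
      rw [two_smul]
      nth_rewrite 1 [h]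
      abel
    have := smul_eq_zero.mp h2
    rcases this with h' | h'
    · norm_num at h'
    · exact h'
  -- every bracket in G lies in the span of bG 1
  have key : ∀ x y : G, brG x y ∈ Submodule.span ℝ ({bG 1} : Set G) := by
    have hbasis : ∀ i j : Fin 3, brG (bG i) (bG j) ∈ Submodule.span ℝ ({bG 1} : Set G) := by
      intro i j
      have mem1 : bG 1 ∈ Submodule.span ℝ ({bG 1} : Set G) :=
        Submodule.mem_span_singleton_self _
      have e0 : (⟨0, by norm_num⟩ : Fin 3) = 0 := rfl
      have e1 : (⟨1, by norm_num⟩ : Fin 3) = 1 := rfl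
      have e2 : (⟨2, by norm_num⟩ : Fin 3) = 2 := rfl
      fin_cases i <;> fin_cases j <;>
        simp only [Fin.isValue, e0, e1, e2] <;>
        first
          | (rw [hGsq]; exact Submodule.zero_mem _)
          | (rw [hbG01]; exact Submodule.zero_mem _)
          | (rw [hbG20]; exact mem1)
          | (rw [hbG21]; exact Submodule.zero_mem _)
          | (rw [hGanti, hbG01, neg_zero]; exact Submodule.zero_mem _)
          | (rw [hGanti, hbG20]; exact Submodule.neg_mem _ mem1)
          | (rw [hGanti, hbG21, neg_zero]; exact Submodule.zero_mem _)
    intro x y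
    have hx : x ∈ Submodule.span ℝ (Set.range bG) := by
      rw [bG.span_eq]; trivial
    have hy : y ∈ Submodule.span ℝ (Set.range bG) := by
      rw [bG.span_eq]; trivial
    induction hx using Submodule.span_induction with
    | mem u hu =>
        obtain ⟨i, rfl⟩ := hu
        induction hy using Submodule.span_induction with
        | mem v hv => obtain ⟨j, rfl⟩ := hv; exact hbasis i j
        | zero => simp only [map_zero]; exact Submodule.zero_mem _
        | add a b _ _ ha hb => rw [map_add]; exact Submodule.add_mem _ ha hb
        | smul c a _ ha => rw [map_smul]; exact Submodule.smul_mem _ c ha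
    | zero => simp only [map_zero, LinearMap.zero_apply]; exact Submodule.zero_mem _
    | add a b _ _ ha hb =>
        rw [map_add, LinearMap.add_apply]; exact Submodule.add_mem _ ha hb
    | smul c a _ ha =>
        rw [map_smul, LinearMap.smul_apply]; exact Submodule.smul_mem _ c ha
  -- f (bL 0) and f (bL 2) both lie in the span of (bG 1, 0)
  obtain ⟨c, hc⟩ := Submodule.mem_span_singleton.mp (key (f (bL 3)).1 (f (bL 2)).1)
  obtain ⟨d, hd⟩ := Submodule.mem_span_singleton.mp (key (f (bL 3)).1 (f (bL 1)).1)
  have h0 : f (bL 0) = c • (bG 1, (0 : ℝ)) := by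
    rw [← hbr32, hf]
    rw [← hc]
    simp [Prod.smul_mk]
  have h2 : f (bL 2) = d • (bG 1, (0 : ℝ)) := by
    rw [← hbr31, hf]
    rw [← hd]
    simp [Prod.smul_mk]
  -- derive linear dependence d • bL 0 - c • bL 2 = 0
  have hdep : d • bL 0 - c • bL 2 = 0 := by
    apply f.injective
    rw [map_sub, map_smul, map_smul, h0, h2, map_zero, smul_smul, smul_smul,
      mul_comm, sub_self]
  have hcoord := congrArg (fun z => bL.repr z 2) hdep
  simp [Finsupp.single_apply] at hcoord
  -- hence c = 0 and f (bL 2) = 0, contradicting injectivity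
  rw [hcoord, zero_smul] at h0
  exact bL.ne_zero 0 (f.injective (by rw [h0, map_zero]))
end

section
/- Let ρ(M), ρ(P₀), ρ(P₁), ρ(K) be the real 4×4 matrices with nonzero entries (ρ(M))₃₄ = −1; (ρ(P₀))₁₄ = −1/2, (ρ(P₀))₂₄ = −1/2, (ρ(P₀))₃₄ = 1; (ρ(P₁))₁₄ = 1/2, (ρ(P₁))₂₄ = −1/2; (ρ(K))₁₁ = −1, (ρ(K))₂₂ = 1. Then for all real numbers θ, a₀, a₁, χ, the matrix exponential product exp(θ ρ(M)) · exp(a₀ ρ(P₀)) · exp(a₁ ρ(P₁)) · exp(χ ρ(K)) equals the matrix with rows (e^{−χ}, 0, 0, −(a₀−a₁)/2), (0, e^{χ}, 0, −(a₀+a₁)/2), (0, 0, 1, −(θ−a₀)), (0, 0, 0, 1). -/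
open Matrix

/-- The fundamental representation of `M` in the centrally extended (1+1) Poincaré Lie
algebra: the 4×4 matrix with `(ρ(M))₃₄ = −1` and all other entries zero. -/
def ρM : Matrix (Fin 4) (Fin 4) ℝ := !![0,0,0,0; 0,0,0,0; 0,0,0,-1; 0,0,0,0]

/-- The fundamental representation of `P₀`: `(ρ(P₀))₁₄ = −1/2`, `(ρ(P₀))₂₄ = −1/2`,
`(ρ(P₀))₃₄ = 1`, other entries zero. -/
noncomputable def ρP₀ : Matrix (Fin 4) (Fin 4) ℝ :=
  !![0,0,0,-(1/2); 0,0,0,-(1/2); 0,0,0,1; 0,0,0,0]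

/-- The fundamental representation of `P₁`: `(ρ(P₁))₁₄ = 1/2`, `(ρ(P₁))₂₄ = −1/2`,
other entries zero. -/
noncomputable def ρP₁ : Matrix (Fin 4) (Fin 4) ℝ :=
  !![0,0,0,1/2; 0,0,0,-(1/2); 0,0,0,0; 0,0,0,0]

/-- The fundamental representation of `K`: `(ρ(K))₁₁ = −1`, `(ρ(K))₂₂ = 1`, other
entries zero. -/
def ρK : Matrix (Fin 4) (Fin 4) ℝ :=
  !![-1,0,0,0; 0,1,0,0; 0,0,0,0; 0,0,0,0]

lemma exp_of_sq_zero (A : Matrix (Fin 4) (Fin 4) ℝ) (h : A ^ 2 = 0) :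
    NormedSpace.exp A = 1 + A := by
  rw [NormedSpace.exp_eq_tsum (𝕂 := ℝ)]
  have hz : ∀ n ∉ Finset.range 2, ((n.factorial : ℝ))⁻¹ • A ^ n = 0 := by
    intro n hn
    rw [Finset.mem_range, not_lt] at hn
    have : A ^ n = A ^ 2 * A ^ (n - 2) := by
      rw [← pow_add]; congr 1; omega
    rw [this, h, zero_mul, smul_zero]
  dsimp only
  rw [tsum_eq_sum hz]
  simp [Finset.sum_range_succ]

/-- The product of matrix exponentials
`exp(θ ρ(M)) · exp(a₀ ρ(P₀)) · exp(a₁ ρ(P₁)) · exp(χ ρ(K))` equals the centrally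
extended (1+1) Poincaré group element with rows `(e^{−χ},0,0,−(a₀−a₁)/2)`,
`(0,e^{χ},0,−(a₀+a₁)/2)`, `(0,0,1,−(θ−a₀))`, `(0,0,0,1)`. -/
theorem statement19 (θ a₀ a₁ χ : ℝ) :
    NormedSpace.exp (θ • ρM) * NormedSpace.exp (a₀ • ρP₀) *
      NormedSpace.exp (a₁ • ρP₁) * NormedSpace.exp (χ • ρK) =
    !![Real.exp (-χ), 0, 0, -((a₀ - a₁)/2);
       0, Real.exp χ, 0, -((a₀ + a₁)/2);
       0, 0, 1, -(θ - a₀);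
       0, 0, 0, 1] := by
  have hM : ρM ^ 2 = 0 := by
    ext i j; fin_cases i <;> fin_cases j <;>
      simp [ρM, pow_two, Matrix.mul_apply, Fin.sum_univ_four, Matrix.vecHead, Matrix.vecTail]
  have hP0 : ρP₀ ^ 2 = 0 := by
    ext i j; fin_cases i <;> fin_cases j <;>
      simp [ρP₀, pow_two, Matrix.mul_apply, Fin.sum_univ_four, Matrix.vecHead, Matrix.vecTail]
  have hP1 : ρP₁ ^ 2 = 0 := by
    ext i j; fin_cases i <;> fin_cases j <;>
      simp [ρP₁, pow_two, Matrix.mul_apply, Fin.sum_univ_four, Matrix.vecHead, Matrix.vecTail]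
  have h1 : (θ • ρM) ^ 2 = 0 := by rw [smul_pow, hM, smul_zero]
  have h2 : (a₀ • ρP₀) ^ 2 = 0 := by rw [smul_pow, hP0, smul_zero]
  have h3 : (a₁ • ρP₁) ^ 2 = 0 := by rw [smul_pow, hP1, smul_zero]
  have hK : χ • ρK = Matrix.diagonal ![-χ, χ, 0, 0] := by
    ext i j; fin_cases i <;> fin_cases j <;>
      simp [ρK, Matrix.diagonal, Matrix.vecHead, Matrix.vecTail]
  rw [exp_of_sq_zero _ h1, exp_of_sq_zero _ h2, exp_of_sq_zero _ h3, hK,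
    Matrix.exp_diagonal]
  ext i j
  fin_cases i <;> fin_cases j <;>
    simp [ρM, ρP₀, ρP₁, Matrix.mul_apply, Fin.sum_univ_four, Matrix.diagonal,
      Matrix.one_apply, Pi.coe_exp, ← Real.exp_eq_exp_ℝ,
      Matrix.vecHead, Matrix.vecTail] <;> ring
end
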